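/- arXiv:2504.20172 — 7 statements merged into one kernel-verified Lean document; each statement's English description precedes it below -/
import Mathlib

section
/- Let G be a periodic causal graph of width w and latency L, let C = L · 2^{Lw} · (Lw+1)^{2Lw+2}, and let X and Y be disjoint finite nonempty sets of vertices of G with tmax(X) ≤ tmin(Y). If a hedge for X, Y exists in G, then there exists Δ ∈ ℕ with Δ ≤ tmin(Y) − tmax(X) such that dist(X, Y_{−Δ}) ≤ C and a hedge for X, Y_{−Δ} exists in G. -/
open Relation

/-- Vertices of a time series graph: `(i, t)` is the vertex in row `i` and layer (time) `t`. -/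
abbrev Vtx : Type := ℕ × ℕ

/-- A mixed graph (directed and bidirected edges) on vertices `(row, time)`. -/
structure MixedGraph where
  verts : Set Vtx
  dir : Vtx → Vtx → Prop
  bi : Vtx → Vtx → Prop

/-- `F` is a subgraph of `H`: its vertices are vertices of `H` and its (directed and
bidirected) edges are edges of `H` with endpoints in `F`. -/
def MixedGraph.IsSubgraphOf (F H : MixedGraph) : Prop :=
  F.verts ⊆ H.verts ∧
  (∀ u v, F.dir u v → H.dir u v ∧ u ∈ F.verts ∧ v ∈ F.verts) ∧
  (∀ u v, F.bi u v → H.bi u v ∧ u ∈ F.verts ∧ v ∈ F.verts)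

/-- Ancestors of `Y` along the directed relation `r`: vertices having a directed
path (possibly of length 0) to some vertex of `Y`. -/
def ancestors (r : Vtx → Vtx → Prop) (Y : Set Vtx) : Set Vtx :=
  {v | ∃ y ∈ Y, Relation.ReflTransGen r v y}

/-- The relation `r` with all directed edges pointing into `X` removed (`H_{X̄}`). -/
def withoutInto (r : Vtx → Vtx → Prop) (X : Set Vtx) : Vtx → Vtx → Prop :=
  fun u v => r u v ∧ v ∉ X

/-- A C-component: every pair of vertices is joined by a path of bidirected edges. -/
def MixedGraph.IsCComponent (F : MixedGraph) : Prop :=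
  ∀ u ∈ F.verts, ∀ v ∈ F.verts,
    Relation.ReflTransGen (fun a b => F.bi a b ∨ F.bi b a) u v

/-- A forest: every vertex has at most one child along directed edges. -/
def MixedGraph.IsForest (F : MixedGraph) : Prop :=
  ∀ u v₁ v₂, F.dir u v₁ → F.dir u v₂ → v₁ = v₂

/-- A C-forest is both a C-component and a forest. -/
def MixedGraph.IsCForest (F : MixedGraph) : Prop :=
  F.IsCComponent ∧ F.IsForest

/-- The roots of a graph: vertices with no child. -/
def MixedGraph.roots (F : MixedGraph) : Set Vtx :=
  {v ∈ F.verts | ∀ u, ¬ F.dir v u}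

/-- A hedge for `X, Y` in the ambient graph `H`: a pair of finite subgraphs `F' ⊆ F ⊆ H`,
both C-forests, with `X ⊆ V(F) \ V(F')`, sharing the same root set `R`, and
`R ⊆ An(Y, H_{X̄})`. -/
def IsHedge (H : MixedGraph) (X Y : Set Vtx) (F F' : MixedGraph) : Prop :=
  F.IsSubgraphOf H ∧ F'.IsSubgraphOf F ∧ F.verts.Finite ∧
  X ⊆ F.verts \ F'.verts ∧
  F.IsCForest ∧ F'.IsCForest ∧
  F.roots = F'.roots ∧
  F.roots ⊆ ancestors (withoutInto H.dir X) Y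

/-- There exists a hedge for `X, Y` in `H` (equivalently, by the hedge criterion,
`P(Y | do X)` is unidentifiable in `H`). -/
def HedgeExists (H : MixedGraph) (X Y : Set Vtx) : Prop :=
  ∃ F F' : MixedGraph, IsHedge H X Y F F'

/-- A periodic causal graph of width `w`: an acyclic directed mixed graph on the
vertices `(i, t)`, `i < w`, `t : ℕ`, whose edges are invariant under time shifts,
and whose directed edges never go backwards in time. -/
structure PeriodicCausalGraph (w : ℕ) where
  dir : Vtx → Vtx → Prop
  bi : Vtx → Vtx → Prop
  dir_row : ∀ u v, dir u v → u.1 < w ∧ v.1 < w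
  bi_row : ∀ u v, bi u v → u.1 < w ∧ v.1 < w
  bi_symm : ∀ u v, bi u v → bi v u
  dir_forward : ∀ u v, dir u v → u.2 ≤ v.2
  dir_shift : ∀ i t i' t', dir (i, t) (i', t') ↔ dir (i, t + 1) (i', t' + 1)
  bi_shift : ∀ i t i' t', bi (i, t) (i', t') ↔ bi (i, t + 1) (i', t' + 1)
  acyclic : ∀ v, ¬ Relation.TransGen dir v v

/-- `G` has latency `L`: every directed or bidirected edge spans at most `L` time steps. -/
def PeriodicCausalGraph.HasLatency {w : ℕ} (G : PeriodicCausalGraph w) (L : ℕ) : Prop :=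
  (∀ u v, G.dir u v → Nat.dist u.2 v.2 ≤ L) ∧
  (∀ u v, G.bi u v → Nat.dist u.2 v.2 ≤ L)

/-- The whole graph `G` viewed as a mixed graph. -/
def PeriodicCausalGraph.whole {w : ℕ} (G : PeriodicCausalGraph w) : MixedGraph :=
  ⟨{v | v.1 < w}, G.dir, G.bi⟩

/-- The segment `G[T, T']`: the induced subgraph on vertices with layer in `[T, T']`. -/
def PeriodicCausalGraph.segment {w : ℕ} (G : PeriodicCausalGraph w) (T T' : ℕ) : MixedGraph :=
  ⟨{v | v.1 < w ∧ T ≤ v.2 ∧ v.2 ≤ T'},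
   fun u v => G.dir u v ∧ (T ≤ u.2 ∧ u.2 ≤ T') ∧ (T ≤ v.2 ∧ v.2 ≤ T'),
   fun u v => G.bi u v ∧ (T ≤ u.2 ∧ u.2 ≤ T') ∧ (T ≤ v.2 ∧ v.2 ≤ T')⟩

/-- The minimum layer of a set of vertices. -/
noncomputable def tmin (S : Set Vtx) : ℕ := sInf (Prod.snd '' S)

/-- The maximum layer of a (finite nonempty) set of vertices. -/
noncomputable def tmax (S : Set Vtx) : ℕ := sSup (Prod.snd '' S)

/-- `dist(X, Y)`: the minimum layer distance between a vertex of `X` and one of `Y`. -/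
noncomputable def layerDist (X Y : Set Vtx) : ℕ :=
  sInf {d | ∃ u ∈ X, ∃ v ∈ Y, d = Nat.dist u.2 v.2}

/-- The set `S` shifted `Δ` layers to the future, `S_{+Δ}`. -/
def shiftUp (Δ : ℕ) (S : Set Vtx) : Set Vtx := (fun v : Vtx => (v.1, v.2 + Δ)) '' S

/-- The set `S` shifted `Δ` layers to the past, `S_{-Δ}` (meaningful when `tmin S ≥ Δ`). -/
def shiftDown (Δ : ℕ) (S : Set Vtx) : Set Vtx := (fun v : Vtx => (v.1, v.2 - Δ)) '' S

/-- The map `Φ_{b,Δ}`: identity on layers `≤ b`, translation by `-Δ` on layers `> b + Δ`. -/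
def Phi (b Δ : ℕ) (v : Vtx) : Vtx := if v.2 ≤ b then v else (v.1, v.2 - Δ)

/-- The image of a mixed graph under a vertex map (vertices and edges mapped). -/
def MixedGraph.mapImage (F : MixedGraph) (f : Vtx → Vtx) : MixedGraph :=
  ⟨f '' F.verts,
   fun u v => ∃ a c, F.dir a c ∧ u = f a ∧ v = f c,
   fun u v => ∃ a c, F.bi a c ∧ u = f a ∧ v = f c⟩

/-- `F \ G[b+1, b+Δ]`: the restriction of `F` to vertices with layer outside
`{b+1, …, b+Δ}`. -/
def MixedGraph.outsideLayers (F : MixedGraph) (b Δ : ℕ) : MixedGraph :=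
  ⟨{v ∈ F.verts | v.2 ≤ b ∨ b + Δ < v.2},
   fun u v => F.dir u v ∧ (u.2 ≤ b ∨ b + Δ < u.2) ∧ (v.2 ≤ b ∨ b + Δ < v.2),
   fun u v => F.bi u v ∧ (u.2 ≤ b ∨ b + Δ < u.2) ∧ (v.2 ≤ b ∨ b + Δ < v.2)⟩

/-- `u` and `v` (in layer `≤ t`) are left-connected in `F` at time `t`: they are joined
by a path of bidirected edges of `F` using only vertices of layer `≤ t`. -/
def leftConnected (F : MixedGraph) (t : ℕ) (u v : Vtx) : Prop :=
  Relation.ReflTransGen (fun a b => (F.bi a b ∨ F.bi b a) ∧ a.2 ≤ t ∧ b.2 ≤ t) u v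

/-- `α_F(t) = α_F(t')`: the ordered partitions of `{0, …, w-1}` (first block the rows `i`
with `(i,t) ∉ V(F)`, subsequent blocks the left-connected components of the layer-`t`
vertices of `F`, sorted by smallest index and padded with empty blocks) agree at layers
`t` and `t'`.  Two such ordered partitions are equal precisely when the corresponding
membership and left-connectedness data agree. -/
def alphaEq (w : ℕ) (F : MixedGraph) (t t' : ℕ) : Prop :=
  (∀ i < w, (((i, t) : Vtx) ∈ F.verts ↔ ((i, t') : Vtx) ∈ F.verts)) ∧
  (∀ i < w, ∀ j < w,
    (leftConnected F t (i, t) (j, t) ↔ leftConnected F t' (i, t') (j, t')))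

/-- `β(t)` (as a set of rows): the rows `i` such that the layer-`t` vertex `(i, t)` of `G`
belongs to `An(Y, G_{X̄})`. -/
def betaRows {w : ℕ} (G : PeriodicCausalGraph w) (X Y : Set Vtx) (t : ℕ) : Set ℕ :=
  {i | i < w ∧ ((i, t) : Vtx) ∈ ancestors (withoutInto G.dir X) Y}

/-- The directed edges of the lower-bound graph `G_w`: from `X_{i,t}` to `X_{i,t+1}`
and to `X_{(i+3) % w, t+1}`. -/
def GwDir (w : ℕ) (u v : Vtx) : Prop :=
  u.1 < w ∧ v.2 = u.2 + 1 ∧ (v.1 = u.1 ∨ v.1 = (u.1 + 3) % w)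

/-- Half of the bidirected edge relation of `G_w`: from `X_{i,t}` to `X_{(i+1) % w, t+1}`
and to `X_{(i+2) % w, t+1}`. -/
def GwBiHalf (w : ℕ) (u v : Vtx) : Prop :=
  u.1 < w ∧ v.2 = u.2 + 1 ∧ (v.1 = (u.1 + 1) % w ∨ v.1 = (u.1 + 2) % w)

/-- The bidirected edges of `G_w` (symmetrized). -/
def GwBi (w : ℕ) (u v : Vtx) : Prop := GwBiHalf w u v ∨ GwBiHalf w v u

/-- The graph `G_w` as a mixed graph. -/
def GwAmbient (w : ℕ) : MixedGraph := ⟨{v | v.1 < w}, GwDir w, GwBi w⟩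

/-- The aggregation map `φ(X_{i,t}) = Y_{i + w·(t % L), ⌊t/L⌋}`. -/
def phiAgg (w L : ℕ) (v : Vtx) : Vtx := (v.1 + w * (v.2 % L), v.2 / L)

/-- A mixed graph shifted `Δ` layers to the future. -/
def shiftGraph (Δ : ℕ) (F : MixedGraph) : MixedGraph :=
  F.mapImage (fun v => (v.1, v.2 + Δ))

namespace HedgePump

open Relation

def dn (Δ : ℕ) (v : Vtx) : Vtx := (v.1, v.2 - Δ)
def upv (Δ : ℕ) (v : Vtx) : Vtx := (v.1, v.2 + Δ)

lemma dn_upv (Δ : ℕ) (v : Vtx) : dn Δ (upv Δ v) = v := by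
  cases v; simp [dn, upv]

lemma upv_dn {Δ : ℕ} {v : Vtx} (h : Δ ≤ v.2) : upv Δ (dn Δ v) = v := by
  cases v with
  | mk a b => simp only [dn, upv, Prod.mk.injEq]; refine ⟨trivial, ?_⟩; simp at h; omega

lemma dn_inj {Δ : ℕ} {u v : Vtx} (hu : Δ ≤ u.2) (hv : Δ ≤ v.2) (h : dn Δ u = dn Δ v) :
    u = v := by
  rw [← upv_dn hu, ← upv_dn hv, h]

lemma dist_le_iff {a b L : ℕ} : Nat.dist a b ≤ L ↔ a ≤ b + L ∧ b ≤ a + L := by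
  simp [Nat.dist]; omega

variable {w : ℕ} (G : PeriodicCausalGraph w)

lemma dir_up_iff (c : ℕ) (u v : Vtx) : G.dir (upv c u) (upv c v) ↔ G.dir u v := by
  induction c with
  | zero => simp [upv]
  | succ n ih =>
    have h1 : upv (n+1) u = ((upv n u).1, (upv n u).2 + 1) := by simp [upv]; omega
    have h2 : upv (n+1) v = ((upv n v).1, (upv n v).2 + 1) := by simp [upv]; omega
    rw [h1, h2, ← G.dir_shift]
    exact ih

lemma bi_up_iff (c : ℕ) (u v : Vtx) : G.bi (upv c u) (upv c v) ↔ G.bi u v := by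
  induction c with
  | zero => simp [upv]
  | succ n ih =>
    have h1 : upv (n+1) u = ((upv n u).1, (upv n u).2 + 1) := by simp [upv]; omega
    have h2 : upv (n+1) v = ((upv n v).1, (upv n v).2 + 1) := by simp [upv]; omega
    rw [h1, h2, ← G.bi_shift]
    exact ih

lemma dir_dn {Δ : ℕ} {u v : Vtx} (hu : Δ ≤ u.2) (hv : Δ ≤ v.2) (h : G.dir u v) :
    G.dir (dn Δ u) (dn Δ v) := by
  rw [← dir_up_iff G Δ, upv_dn hu, upv_dn hv]; exact h

lemma bi_dn {Δ : ℕ} {u v : Vtx} (hu : Δ ≤ u.2) (hv : Δ ≤ v.2) (h : G.bi u v) :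
    G.bi (dn Δ u) (dn Δ v) := by
  rw [← bi_up_iff G Δ, upv_dn hu, upv_dn hv]; exact h

/-! ### tmin / tmax facts -/

lemma tmin_le {S : Set Vtx} {v : Vtx} (hv : v ∈ S) : tmin S ≤ v.2 :=
  Nat.sInf_le ⟨v, hv, rfl⟩

lemma tmin_mem {S : Set Vtx} (hne : S.Nonempty) : ∃ v ∈ S, v.2 = tmin S := by
  obtain ⟨v, hv⟩ := hne
  have : (Prod.snd '' S).Nonempty := ⟨v.2, v, hv, rfl⟩
  obtain ⟨u, hu, he⟩ := Nat.sInf_mem this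
  exact ⟨u, hu, he⟩

lemma le_tmax {S : Set Vtx} (hfin : S.Finite) {v : Vtx} (hv : v ∈ S) : v.2 ≤ tmax S :=
  le_csSup (Set.Finite.bddAbove (hfin.image _)) ⟨v, hv, rfl⟩

lemma tmax_mem {S : Set Vtx} (hfin : S.Finite) (hne : S.Nonempty) :
    ∃ v ∈ S, v.2 = tmax S := by
  obtain ⟨v, hv⟩ := hne
  have hne' : (Prod.snd '' S).Nonempty := ⟨v.2, v, hv, rfl⟩
  obtain ⟨u, hu, he⟩ := Nat.sSup_mem hne' (Set.Finite.bddAbove (hfin.image _))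
  exact ⟨u, hu, he⟩

lemma notmem_of_gt_tmax {S : Set Vtx} (hfin : S.Finite) {v : Vtx}
    (h : tmax S < v.2) : v ∉ S := fun hv => absurd (le_tmax hfin hv) (by omega)

/-! ### shiftDown facts -/

lemma mem_shiftDown {Δ : ℕ} {Y : Set Vtx} {y : Vtx} (hy : y ∈ Y) :
    dn Δ y ∈ shiftDown Δ Y := ⟨y, hy, rfl⟩

lemma shiftDown_zero (Y : Set Vtx) : shiftDown 0 Y = Y := by
  ext v
  constructor
  · rintro ⟨u, hu, rfl⟩; simpa using hu
  · intro hv; exact ⟨v, hv, by simp⟩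

lemma shiftDown_shiftDown (a b : ℕ) (Y : Set Vtx) :
    shiftDown b (shiftDown a Y) = shiftDown (a + b) Y := by
  unfold shiftDown
  rw [Set.image_image]
  apply Set.image_congr'
  intro v
  simp [Nat.sub_sub]

lemma tmin_shiftDown {Δ : ℕ} {Y : Set Vtx} (hne : Y.Nonempty) (h : Δ ≤ tmin Y) :
    tmin (shiftDown Δ Y) = tmin Y - Δ := by
  obtain ⟨y0, hy0, he⟩ := tmin_mem hne
  apply le_antisymm
  · have := tmin_le (mem_shiftDown (Δ := Δ) hy0)
    simpa [dn, he] using this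
  · obtain ⟨z, hz, hze⟩ := tmin_mem (S := shiftDown Δ Y) (hne.image _)
    obtain ⟨y, hy, rfl⟩ := hz
    have h1 : tmin Y ≤ y.2 := tmin_le hy
    have h2 : ((fun v : Vtx => (v.1, v.2 - Δ)) y).2 = y.2 - Δ := rfl
    rw [h2] at hze
    omega

lemma shiftDown_subset_whole {Δ : ℕ} {Y : Set Vtx} (hY : Y ⊆ G.whole.verts) :
    shiftDown Δ Y ⊆ G.whole.verts := by
  rintro v ⟨y, hy, rfl⟩
  have := hY hy
  simpa [PeriodicCausalGraph.whole] using this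

/-! ### shifting ancestor paths down -/

lemma ancestors_path_dn {L : ℕ} (hlat : G.HasLatency L) (X : Set Vtx) (hXfin : X.Finite)
    (Δ : ℕ) {q y : Vtx} (hp : ReflTransGen (withoutInto G.dir X) q y)
    (hq : tmax X + Δ < q.2) :
    ReflTransGen (withoutInto G.dir X) (dn Δ q) (dn Δ y) := by
  induction hp using ReflTransGen.head_induction_on with
  | refl => exact ReflTransGen.refl
  | head hstep htail ih =>
    rename_i a c
    obtain ⟨hd, hnx⟩ := hstep
    have hac : a.2 ≤ c.2 := G.dir_forward _ _ hd
    have hstep' : withoutInto G.dir X (dn Δ a) (dn Δ c) := by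
      refine ⟨dir_dn G (by omega) (by omega) hd, ?_⟩
      apply notmem_of_gt_tmax hXfin
      show tmax X < c.2 - Δ
      omega
    exact ReflTransGen.head hstep' (ih (by omega))

end HedgePump
namespace HedgePump

open Relation

/-- The glued graph: keep layers `≤ t` of `F`, shift layers `> s` down by `Δ`
(where `s = t + Δ - L`), deleting layers in `(t, s]`. -/
def glue (L : ℕ) (F : MixedGraph) (t s Δ : ℕ) : MixedGraph where
  verts := {v | v ∈ F.verts ∧ v.2 ≤ t} ∪ dn Δ '' {v | v ∈ F.verts ∧ s < v.2}
  dir := fun u v => (F.dir u v ∧ u.2 + L ≤ t) ∨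
    (∃ u₀ v₀, F.dir u₀ v₀ ∧ s < u₀.2 ∧ u = dn Δ u₀ ∧ v = dn Δ v₀)
  bi := fun u v => (F.bi u v ∧ u.2 ≤ t ∧ v.2 ≤ t) ∨
    (∃ u₀ v₀, F.bi u₀ v₀ ∧ s < u₀.2 ∧ s < v₀.2 ∧ u = dn Δ u₀ ∧ v = dn Δ v₀)

/-- bidirected connectivity in the glued graph -/
def gconn (L : ℕ) (F : MixedGraph) (t s Δ : ℕ) : Vtx → Vtx → Prop :=
  ReflTransGen (fun a b => (glue L F t s Δ).bi a b ∨ (glue L F t s Δ).bi b a)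

/-- bidirected connectivity of `F` within layers `> s` -/
def hiconn (F : MixedGraph) (s : ℕ) : Vtx → Vtx → Prop :=
  ReflTransGen (fun a b => (F.bi a b ∨ F.bi b a) ∧ s < a.2 ∧ s < b.2)

section GlueLemmas

variable {w : ℕ} {G : PeriodicCausalGraph w} {L : ℕ} {F : MixedGraph} {t s Δ : ℕ}
variable (hlat : G.HasLatency L) (hsub : F.IsSubgraphOf G.whole)
variable (hs : s + L = t + Δ) (h2L : 2 * L ≤ L + Δ) (hL1 : 1 ≤ L) (hLt : L ≤ t)

include hlat hsub in
lemma F_dir_facts {u v : Vtx} (h : F.dir u v) :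
    u ∈ F.verts ∧ v ∈ F.verts ∧ u.1 < w ∧ v.1 < w ∧ u.2 ≤ v.2 ∧ v.2 ≤ u.2 + L := by
  obtain ⟨hG, hu, hv⟩ := hsub.2.1 u v h
  have h1 := hsub.1 hu
  have h2 := hsub.1 hv
  have h3 := G.dir_forward u v hG
  have h4 := (dist_le_iff).mp (hlat.1 u v hG)
  exact ⟨hu, hv, h1, h2, h3, h4.2⟩

include hlat hsub in
lemma F_bi_facts {u v : Vtx} (h : F.bi u v) :
    u ∈ F.verts ∧ v ∈ F.verts ∧ u.1 < w ∧ v.1 < w ∧ u.2 ≤ v.2 + L ∧ v.2 ≤ u.2 + L := by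
  obtain ⟨hG, hu, hv⟩ := hsub.2.2 u v h
  have h1 := hsub.1 hu
  have h2 := hsub.1 hv
  have h4 := (dist_le_iff).mp (hlat.2 u v hG)
  exact ⟨hu, hv, h1, h2, h4.1, h4.2⟩

include hsub in
lemma vrow {v : Vtx} (h : v ∈ F.verts) : v.1 < w := hsub.1 h

include hs hLt in
lemma hΔs : Δ ≤ s := by omega

include hlat hsub hs hLt in
lemma glue_subgraph : (glue L F t s Δ).IsSubgraphOf G.whole := by
  refine ⟨?_, ?_, ?_⟩
  · rintro v (⟨hv, -⟩ | ⟨v₀, ⟨hv₀, -⟩, rfl⟩)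
    · exact hsub.1 hv
    · have h := hsub.1 hv₀
      simp only [PeriodicCausalGraph.whole, Set.mem_setOf_eq] at h ⊢
      exact h
  · rintro u v (⟨hd, hu⟩ | ⟨u₀, v₀, hd, hs0, rfl, rfl⟩)
    · obtain ⟨h1, h2, _, _, _, h6⟩ := F_dir_facts hlat hsub hd
      exact ⟨(hsub.2.1 u v hd).1, Or.inl ⟨h1, by omega⟩, Or.inl ⟨h2, by omega⟩⟩
    · obtain ⟨h1, h2, _, _, h5, _⟩ := F_dir_facts hlat hsub hd
      refine ⟨dir_dn G (by omega) (by omega) (hsub.2.1 u₀ v₀ hd).1, ?_, ?_⟩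
      · exact Or.inr ⟨u₀, ⟨h1, hs0⟩, rfl⟩
      · exact Or.inr ⟨v₀, ⟨h2, by omega⟩, rfl⟩
  · rintro u v (⟨hd, hu, hv⟩ | ⟨u₀, v₀, hd, hs0, hs0', rfl, rfl⟩)
    · obtain ⟨h1, h2, _, _, _, _⟩ := F_bi_facts hlat hsub hd
      exact ⟨(hsub.2.2 u v hd).1, Or.inl ⟨h1, hu⟩, Or.inl ⟨h2, hv⟩⟩
    · obtain ⟨h1, h2, _, _, _, _⟩ := F_bi_facts hlat hsub hd
      refine ⟨bi_dn G (by omega) (by omega) (hsub.2.2 u₀ v₀ hd).1, ?_, ?_⟩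
      · exact Or.inr ⟨u₀, ⟨h1, hs0⟩, rfl⟩
      · exact Or.inr ⟨v₀, ⟨h2, hs0'⟩, rfl⟩

lemma glue_finite (hfin : F.verts.Finite) : (glue L F t s Δ).verts.Finite :=
  (hfin.subset (fun _ h => h.1)).union ((hfin.subset (fun _ h => h.1)).image _)

include hs hLt in
lemma glue_forest (hforest : F.IsForest) : (glue L F t s Δ).IsForest := by
  rintro u v₁ v₂ (⟨h1, hu1⟩ | ⟨u₀, v₀, h1, hs1, rfl, rfl⟩)
    (⟨h2, hu2⟩ | ⟨u₀', v₀', h2, hs2, he2, rfl⟩)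
  · exact hforest _ _ _ h1 h2
  · exfalso
    have : u₀'.2 - Δ = (dn Δ u₀').2 := rfl
    rw [← he2] at this
    omega
  · exfalso
    have : u₀.2 - Δ = (dn Δ u₀).2 := rfl
    omega
  · have he : u₀ = u₀' := dn_inj (by omega) (by omega) he2
    rw [hforest u₀ v₀ v₀' h1 (he ▸ h2)]

end GlueLemmas

end HedgePump
namespace HedgePump

open Relation

section CComp

variable {w : ℕ} {G : PeriodicCausalGraph w} {L : ℕ} {F : MixedGraph} {t s Δ : ℕ}
variable (hlat : G.HasLatency L) (hsub : F.IsSubgraphOf G.whole)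
variable (hs : s + L = t + Δ) (h2L : 2 * L ≤ L + Δ) (hL1 : 1 ≤ L) (hLt : L ≤ t)

lemma gconn_symm {u v : Vtx} (h : gconn L F t s Δ u v) : gconn L F t s Δ v u :=
  ReflTransGen.mono (fun _ _ hh => Or.symm hh) _ _ (reflTransGen_swap.mpr h)

lemma gconn_of_lc {u v : Vtx} (h : leftConnected F t u v) : gconn L F t s Δ u v := by
  refine ReflTransGen.mono ?_ _ _ h
  rintro a b ⟨h1 | h1, h2, h3⟩
  · exact Or.inl (Or.inl ⟨h1, h2, h3⟩)
  · exact Or.inr (Or.inl ⟨h1, h3, h2⟩)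

lemma gconn_of_hc {u v : Vtx} (h : hiconn F s u v) :
    gconn L F t s Δ (dn Δ u) (dn Δ v) := by
  refine ReflTransGen.lift (dn Δ) ?_ _ _ h
  rintro a b ⟨h1 | h1, h2, h3⟩
  · exact Or.inl (Or.inr ⟨a, b, h1, h2, h3, rfl, rfl⟩)
  · exact Or.inr (Or.inr ⟨b, a, h1, h3, h2, rfl, rfl⟩)

include hlat hsub in
lemma reach_low (hcc : F.IsCComponent)
    (hB : ∃ b, b ∈ F.verts ∧ t < b.2 + L ∧ b.2 ≤ t)
    {u : Vtx} (hu : u ∈ F.verts) (hut : u.2 ≤ t) :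
    ∃ b, (b ∈ F.verts ∧ t < b.2 + L ∧ b.2 ≤ t) ∧ leftConnected F t u b := by
  by_contra hcon
  push_neg at hcon
  obtain ⟨b, hbF, hb1, hb2⟩ := hB
  have key : ∀ v, ReflTransGen (fun a b => F.bi a b ∨ F.bi b a) u v →
      leftConnected F t u v ∧ v.2 ≤ t := by
    intro v hv
    induction hv with
    | refl => exact ⟨ReflTransGen.refl, hut⟩
    | tail hseg hstep ih =>
      rename_i c d
      obtain ⟨hlc, hct⟩ := ih
      have hcF : c ∈ F.verts := by
        rcases hstep with h | h
        · exact (F_bi_facts hlat hsub h).1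
        · exact (F_bi_facts hlat hsub h).2.1
      have hdist : d.2 ≤ c.2 + L := by
        rcases hstep with h | h
        · exact (F_bi_facts hlat hsub h).2.2.2.2.2
        · exact (F_bi_facts hlat hsub h).2.2.2.2.1
      by_cases hdt : d.2 ≤ t
      · exact ⟨hlc.tail ⟨hstep, hct, hdt⟩, hdt⟩
      · exact absurd hlc (hcon c ⟨hcF, by omega, hct⟩)
  obtain ⟨h1, -⟩ := key b (hcc u hu b hbF)
  exact hcon b ⟨hbF, hb1, hb2⟩ h1

include hlat hsub in
lemma reach_high (hcc : F.IsCComponent)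
    (hanchor : ∃ z, z ∈ F.verts ∧ z.2 ≤ s)
    {u : Vtx} (hu : u ∈ F.verts) (hus : s < u.2) :
    ∃ b, (b ∈ F.verts ∧ s < b.2 ∧ b.2 ≤ s + L) ∧ hiconn F s u b := by
  by_contra hcon
  push_neg at hcon
  obtain ⟨z, hzF, hz⟩ := hanchor
  have key : ∀ v, ReflTransGen (fun a b => F.bi a b ∨ F.bi b a) u v →
      hiconn F s u v ∧ s < v.2 := by
    intro v hv
    induction hv with
    | refl => exact ⟨ReflTransGen.refl, hus⟩
    | tail hseg hstep ih =>
      rename_i c d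
      obtain ⟨hhc, hcs⟩ := ih
      have hcF : c ∈ F.verts := by
        rcases hstep with h | h
        · exact (F_bi_facts hlat hsub h).1
        · exact (F_bi_facts hlat hsub h).2.1
      have hdist : c.2 ≤ d.2 + L := by
        rcases hstep with h | h
        · exact (F_bi_facts hlat hsub h).2.2.2.2.1
        · exact (F_bi_facts hlat hsub h).2.2.2.2.2
      by_cases hds : s < d.2
      · exact ⟨hhc.tail ⟨hstep, hcs, hds⟩, hds⟩
      · exact absurd hhc (hcon c ⟨hcF, hcs, by omega⟩)
  obtain ⟨-, h2⟩ := key z (hcc u hu z hzF)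
  omega

lemma lc_symm {T : ℕ} {u v : Vtx} (h : leftConnected F T u v) : leftConnected F T v u :=
  ReflTransGen.mono (fun _ _ hh => ⟨Or.symm hh.1, hh.2.2, hh.2.1⟩) _ _ (reflTransGen_swap.mpr h)

include hlat hsub hs hLt in
lemma block_transfer (hcc : F.IsCComponent)
    (hmem : ∀ v : Vtx, v.1 < w → t < v.2 + L → v.2 ≤ t → (v ∈ F.verts ↔ upv Δ v ∈ F.verts))
    (hlc : ∀ u v : Vtx, t < u.2 + L → u.2 ≤ t → t < v.2 + L → v.2 ≤ t →
      upv Δ u ∈ F.verts → upv Δ v ∈ F.verts →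
      leftConnected F (t + Δ) (upv Δ u) (upv Δ v) → leftConnected F t u v)
    {b₁ b₂ : Vtx} (h₁ : b₁ ∈ F.verts) (h₁b : t < b₁.2 + L) (h₁b' : b₁.2 ≤ t)
    (h₂ : b₂ ∈ F.verts) (h₂b : t < b₂.2 + L) (h₂b' : b₂.2 ≤ t) :
    gconn L F t s Δ b₁ b₂ := by
  have hrow₁ : b₁.1 < w := hsub.1 h₁
  have hrow₂ : b₂.1 < w := hsub.1 h₂
  set c₁ := upv Δ b₁ with hc₁
  set c₂ := upv Δ b₂ with hc₂
  have hc₁F : c₁ ∈ F.verts := (hmem b₁ hrow₁ h₁b h₁b').mp h₁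
  have hc₂F : c₂ ∈ F.verts := (hmem b₂ hrow₂ h₂b h₂b').mp h₂
  have hc₂s : s < c₂.2 ∧ c₂.2 ≤ s + L := by
    constructor <;> (show _ ; simp only [hc₂, upv]; omega)
  have main : ∀ p, ReflTransGen (fun a b => F.bi a b ∨ F.bi b a) p c₂ → p ∈ F.verts →
      ((s < p.2 → gconn L F t s Δ (dn Δ p) (dn Δ c₂)) ∧
       (p.2 ≤ s + L → ∀ c, c ∈ F.verts → s < c.2 → c.2 ≤ s + L →
          leftConnected F (t + Δ) p c → gconn L F t s Δ (dn Δ c) (dn Δ c₂))) := by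
    intro p hp
    induction hp using ReflTransGen.head_induction_on with
    | refl =>
      intro hpF
      constructor
      · intro _; exact ReflTransGen.refl
      · intro hp2 c hcF hc1 hc2 hlcc
        have hlcc' : leftConnected F (t + Δ) (upv Δ (dn Δ c)) (upv Δ (dn Δ c₂)) := by
          rw [upv_dn (by omega), upv_dn (by omega)]
          exact lc_symm hlcc
        have := hlc (dn Δ c) (dn Δ c₂)
          (by show t < c.2 - Δ + L; omega) (by show c.2 - Δ ≤ t; omega)
          (by show t < c₂.2 - Δ + L; omega) (by show c₂.2 - Δ ≤ t; omega)
          (by rw [upv_dn (by omega : Δ ≤ c.2)]; exact hcF)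
          (by rw [upv_dn (by omega : Δ ≤ c₂.2)]; exact hc₂F) hlcc'
        exact gconn_of_lc this
    | head hstep htail ih =>
      rename_i a c
      intro haF
      have hcF : c ∈ F.verts := by
        rcases hstep with h | h
        · exact (F_bi_facts hlat hsub h).2.1
        · exact (F_bi_facts hlat hsub h).1
      have hac : a.2 ≤ c.2 + L ∧ c.2 ≤ a.2 + L := by
        rcases hstep with h | h
        · exact ⟨(F_bi_facts hlat hsub h).2.2.2.2.1, (F_bi_facts hlat hsub h).2.2.2.2.2⟩
        · exact ⟨(F_bi_facts hlat hsub h).2.2.2.2.2, (F_bi_facts hlat hsub h).2.2.2.2.1⟩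
      have h1 : s < a.2 → gconn L F t s Δ (dn Δ a) (dn Δ c₂) := by
        intro has
        by_cases hcs : s < c.2
        · have hone : gconn L F t s Δ (dn Δ a) (dn Δ c) := by
            refine ReflTransGen.single ?_
            rcases hstep with h | h
            · exact Or.inl (Or.inr ⟨a, c, h, has, hcs, rfl, rfl⟩)
            · exact Or.inr (Or.inr ⟨c, a, h, hcs, has, rfl, rfl⟩)
          exact hone.trans ((ih hcF).1 hcs)
        · have hlca : leftConnected F (t + Δ) c a := by
            refine ReflTransGen.single ⟨Or.symm hstep, by omega, by omega⟩
          exact (ih hcF).2 (by omega) a haF has (by omega) hlca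
      refine ⟨h1, ?_⟩
      intro hp2 c' hc'F hc'1 hc'2 hlcac
      by_cases hcs : c.2 ≤ s + L
      · have hlccc' : leftConnected F (t + Δ) c c' := by
          refine ReflTransGen.trans (ReflTransGen.single ⟨Or.symm hstep, by omega, by omega⟩) hlcac
        exact (ih hcF).2 hcs c' hc'F hc'1 hc'2 hlccc'
      · have has : s < a.2 := by omega
        have hconn_a := h1 has
        have hlow : leftConnected F t (dn Δ a) (dn Δ c') := by
          apply hlc (dn Δ a) (dn Δ c')
            (by show t < a.2 - Δ + L; omega) (by show a.2 - Δ ≤ t; omega)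
            (by show t < c'.2 - Δ + L; omega) (by show c'.2 - Δ ≤ t; omega)
            (by rw [upv_dn (by omega : Δ ≤ a.2)]; exact haF)
            (by rw [upv_dn (by omega : Δ ≤ c'.2)]; exact hc'F)
          rw [upv_dn (by omega : Δ ≤ a.2), upv_dn (by omega : Δ ≤ c'.2)]
          exact hlcac
        exact (gconn_symm (gconn_of_lc hlow)).trans hconn_a
  have hfin := (main c₁ (hcc c₁ hc₁F c₂ hc₂F) hc₁F).1 (by show s < b₁.2 + Δ; omega)
  rw [dn_upv, dn_upv] at hfin
  exact hfin

end CComp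

end HedgePump
namespace HedgePump

open Relation

section CComp2

variable {w : ℕ} {G : PeriodicCausalGraph w} {L : ℕ} {F : MixedGraph} {t s Δ : ℕ}
variable (hlat : G.HasLatency L) (hsub : F.IsSubgraphOf G.whole)
variable (hs : s + L = t + Δ) (h2L : 2 * L ≤ L + Δ) (hL1 : 1 ≤ L) (hLt : L ≤ t)

include hlat hsub hs h2L hL1 hLt in
lemma glue_ccomp (hcc : F.IsCComponent)
    (hmem : ∀ v : Vtx, v.1 < w → t < v.2 + L → v.2 ≤ t → (v ∈ F.verts ↔ upv Δ v ∈ F.verts))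
    (hlc : ∀ u v : Vtx, t < u.2 + L → u.2 ≤ t → t < v.2 + L → v.2 ≤ t →
      upv Δ u ∈ F.verts → upv Δ v ∈ F.verts →
      leftConnected F (t + Δ) (upv Δ u) (upv Δ v) → leftConnected F t u v) :
    (glue L F t s Δ).IsCComponent := by
  intro x hx y hy
  by_cases hB : ∃ b, b ∈ F.verts ∧ t < b.2 + L ∧ b.2 ≤ t
  · -- there is a block vertex
    have reachG : ∀ z ∈ (glue L F t s Δ).verts,
        ∃ b, (b ∈ F.verts ∧ t < b.2 + L ∧ b.2 ≤ t) ∧ gconn L F t s Δ z b := by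
      rintro z (⟨hzF, hzt⟩ | ⟨z₀, ⟨hz₀F, hz₀s⟩, rfl⟩)
      · obtain ⟨b, hb, hlcb⟩ := reach_low hlat hsub hcc hB hzF hzt
        exact ⟨b, hb, gconn_of_lc hlcb⟩
      · obtain ⟨bb, hbb1, hbb2⟩ := hB
        have hanchor : ∃ zz, zz ∈ F.verts ∧ zz.2 ≤ s := ⟨bb, hbb1, by omega⟩
        obtain ⟨b₀, ⟨hb₀F, hb₀1, hb₀2⟩, hhc⟩ := reach_high hlat hsub hcc hanchor hz₀F hz₀s
        refine ⟨dn Δ b₀, ⟨?_, ?_, ?_⟩, gconn_of_hc hhc⟩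
        · have := (hmem (dn Δ b₀) (vrow (v := b₀) hsub hb₀F) ?_ ?_).mpr
          · rw [upv_dn (by omega : Δ ≤ b₀.2)] at this
            exact this hb₀F
          · show t < b₀.2 - Δ + L; omega
          · show b₀.2 - Δ ≤ t; omega
        · show t < b₀.2 - Δ + L; omega
        · show b₀.2 - Δ ≤ t; omega
    obtain ⟨b, ⟨hbF, hb1, hb2⟩, hxb⟩ := reachG x hx
    obtain ⟨b', ⟨hb'F, hb'1, hb'2⟩, hyb'⟩ := reachG y hy
    exact hxb.trans ((block_transfer hlat hsub hs hLt hcc hmem hlc hbF hb1 hb2 hb'F hb'1 hb'2).trans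
      (gconn_symm hyb'))
  · -- no block vertex
    have hBn : ∀ b, b ∈ F.verts → b.2 ≤ t → b.2 + L ≤ t := by
      intro b hb hbt
      by_contra h
      exact hB ⟨b, hb, by omega, hbt⟩
    have hBn' : ∀ b, b ∈ F.verts → s < b.2 → s + L < b.2 := by
      intro b hb hbs
      by_contra h
      have hmemb := (hmem (dn Δ b) (vrow (v := b) hsub hb) (by show t < b.2 - Δ + L; omega)
        (by show b.2 - Δ ≤ t; omega)).mpr
      rw [upv_dn (by omega : Δ ≤ b.2)] at hmemb
      have hdnF := hmemb hb
      have := hBn (dn Δ b) hdnF (by show b.2 - Δ ≤ t; omega)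
      have h2 : b.2 - Δ + L ≤ t := this
      omega
    have lowprop : ∀ u, u ∈ F.verts → u.2 + L ≤ t →
        ∀ v, ReflTransGen (fun a b => F.bi a b ∨ F.bi b a) u v →
        gconn L F t s Δ u v ∧ v.2 + L ≤ t := by
      intro u huF hut v hv
      induction hv with
      | refl => exact ⟨ReflTransGen.refl, hut⟩
      | tail hseg hstep ih =>
        rename_i c d
        obtain ⟨hg, hct⟩ := ih
        have hdF : d ∈ F.verts := by
          rcases hstep with h | h
          · exact (F_bi_facts hlat hsub h).2.1
          · exact (F_bi_facts hlat hsub h).1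
        have hdist : d.2 ≤ c.2 + L := by
          rcases hstep with h | h
          · exact (F_bi_facts hlat hsub h).2.2.2.2.2
          · exact (F_bi_facts hlat hsub h).2.2.2.2.1
        have hdt : d.2 + L ≤ t := hBn d hdF (by omega)
        have hstep' : gconn L F t s Δ c d := by
          refine ReflTransGen.single ?_
          rcases hstep with h | h
          · exact Or.inl (Or.inl ⟨h, by omega, by omega⟩)
          · exact Or.inr (Or.inl ⟨h, by omega, by omega⟩)
        exact ⟨hg.trans hstep', hdt⟩
    have hiprop : ∀ u, u ∈ F.verts → s + L < u.2 →
        ∀ v, ReflTransGen (fun a b => F.bi a b ∨ F.bi b a) u v →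
        hiconn F s u v ∧ s + L < v.2 := by
      intro u huF hus v hv
      induction hv with
      | refl => exact ⟨ReflTransGen.refl, hus⟩
      | tail hseg hstep ih =>
        rename_i c d
        obtain ⟨hg, hcs⟩ := ih
        have hdF : d ∈ F.verts := by
          rcases hstep with h | h
          · exact (F_bi_facts hlat hsub h).2.1
          · exact (F_bi_facts hlat hsub h).1
        have hdist : c.2 ≤ d.2 + L := by
          rcases hstep with h | h
          · exact (F_bi_facts hlat hsub h).2.2.2.2.1
          · exact (F_bi_facts hlat hsub h).2.2.2.2.2
        have hds : s + L < d.2 := hBn' d hdF (by omega)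
        exact ⟨hg.tail ⟨hstep, by omega, by omega⟩, hds⟩
    rcases hx with ⟨hxF, hxt⟩ | ⟨x₀, ⟨hx₀F, hx₀s⟩, rfl⟩ <;>
      rcases hy with ⟨hyF, hyt⟩ | ⟨y₀, ⟨hy₀F, hy₀s⟩, rfl⟩
    · exact (lowprop x hxF (hBn x hxF hxt) y (hcc x hxF y hyF)).1
    · exfalso
      have := (lowprop x hxF (hBn x hxF hxt) y₀ (hcc x hxF y₀ hy₀F)).2
      omega
    · exfalso
      have := (lowprop y hyF (hBn y hyF hyt) x₀ (hcc y hyF x₀ hx₀F)).2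
      omega
    · exact gconn_of_hc (hiprop x₀ hx₀F (hBn' x₀ hx₀F hx₀s) y₀ (hcc x₀ hx₀F y₀ hy₀F)).1

include hs hL1 hLt in
lemma glue_roots
    (hmem : ∀ v : Vtx, v.1 < w → t < v.2 + L → v.2 ≤ t → (v ∈ F.verts ↔ upv Δ v ∈ F.verts))
    (hrow : F.verts ⊆ {v | v.1 < w}) (hforest : F.IsForest) :
    (glue L F t s Δ).roots =
      {v | v ∈ F.roots ∧ v.2 + L ≤ t} ∪ dn Δ '' {v | v ∈ F.roots ∧ s < v.2} := by
  ext v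
  constructor
  · rintro ⟨hv, hnc⟩
    rcases hv with ⟨hvF, hvt⟩ | ⟨v₀, ⟨hv₀F, hv₀s⟩, rfl⟩
    · by_cases hblk : v.2 + L ≤ t
      · left
        refine ⟨⟨hvF, ?_⟩, hblk⟩
        intro u hu
        exact hnc u (Or.inl ⟨hu, hblk⟩)
      · right
        have hupF : upv Δ v ∈ F.verts := (hmem v (hrow hvF) (by omega) hvt).mp hvF
        refine ⟨upv Δ v, ⟨⟨hupF, ?_⟩, by show s < v.2 + Δ; omega⟩, dn_upv Δ v⟩
        intro u hu
        apply hnc (dn Δ u)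
        exact Or.inr ⟨upv Δ v, u, hu, by show s < v.2 + Δ; omega, (dn_upv Δ v).symm, rfl⟩
    · right
      refine ⟨v₀, ⟨⟨hv₀F, ?_⟩, hv₀s⟩, rfl⟩
      intro u hu
      exact hnc (dn Δ u) (Or.inr ⟨v₀, u, hu, hv₀s, rfl, rfl⟩)
  · rintro (⟨⟨hvF, hnc⟩, hblk⟩ | ⟨v₀, ⟨⟨hv₀F, hnc⟩, hv₀s⟩, rfl⟩)
    · refine ⟨Or.inl ⟨hvF, by omega⟩, ?_⟩
      rintro u (⟨hd, -⟩ | ⟨u₀, w₀, hd, hu₀s, he, rfl⟩)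
      · exact hnc u hd
      · have : u₀.2 - Δ = (dn Δ u₀).2 := rfl
        rw [← he] at this
        omega
    · refine ⟨Or.inr ⟨v₀, ⟨hv₀F, hv₀s⟩, rfl⟩, ?_⟩
      rintro u (⟨hd, hle⟩ | ⟨u₀, w₀, hd, hu₀s, he, rfl⟩)
      · have : (dn Δ v₀).2 + L ≤ t := hle
        have h2 : (dn Δ v₀).2 = v₀.2 - Δ := rfl
        omega
      · have : u₀ = v₀ := dn_inj (by omega) (by omega) he.symm
        exact hnc w₀ (this ▸ hd)

lemma glue_mono {F' : MixedGraph}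
    (hlat : G.HasLatency L) (hsub : F.IsSubgraphOf G.whole) (hFF' : F'.IsSubgraphOf F) :
    (glue L F' t s Δ).IsSubgraphOf (glue L F t s Δ) := by
  have hsub' : F'.IsSubgraphOf G.whole := by
    refine ⟨fun v hv => hsub.1 (hFF'.1 hv), ?_, ?_⟩
    · intro u v h
      obtain ⟨h1, h2, h3⟩ := hFF'.2.1 u v h
      exact ⟨(hsub.2.1 u v h1).1, h2, h3⟩
    · intro u v h
      obtain ⟨h1, h2, h3⟩ := hFF'.2.2 u v h
      exact ⟨(hsub.2.2 u v h1).1, h2, h3⟩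
  refine ⟨?_, ?_, ?_⟩
  · rintro v (⟨hv, hvt⟩ | ⟨v₀, ⟨hv₀, hv₀s⟩, rfl⟩)
    · exact Or.inl ⟨hFF'.1 hv, hvt⟩
    · exact Or.inr ⟨v₀, ⟨hFF'.1 hv₀, hv₀s⟩, rfl⟩
  · rintro u v (⟨hd, hu⟩ | ⟨u₀, v₀, hd, hs0, rfl, rfl⟩)
    · obtain ⟨h1, h2, h3⟩ := hFF'.2.1 u v hd
      obtain ⟨_, _, _, _, _, h6⟩ := F_dir_facts hlat hsub' hd
      exact ⟨Or.inl ⟨h1, hu⟩, Or.inl ⟨h2, by omega⟩, Or.inl ⟨h3, by omega⟩⟩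
    · obtain ⟨h1, h2, h3⟩ := hFF'.2.1 u₀ v₀ hd
      obtain ⟨_, _, _, _, h5, _⟩ := F_dir_facts hlat hsub' hd
      exact ⟨Or.inr ⟨u₀, v₀, h1, hs0, rfl, rfl⟩, Or.inr ⟨u₀, ⟨h2, hs0⟩, rfl⟩,
        Or.inr ⟨v₀, ⟨h3, by omega⟩, rfl⟩⟩
  · rintro u v (⟨hd, hu, hv⟩ | ⟨u₀, v₀, hd, hs0, hs0', rfl, rfl⟩)
    · obtain ⟨h1, h2, h3⟩ := hFF'.2.2 u v hd
      exact ⟨Or.inl ⟨h1, hu, hv⟩, Or.inl ⟨h2, hu⟩, Or.inl ⟨h3, hv⟩⟩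
    · obtain ⟨h1, h2, h3⟩ := hFF'.2.2 u₀ v₀ hd
      exact ⟨Or.inr ⟨u₀, v₀, h1, hs0, hs0', rfl, rfl⟩, Or.inr ⟨u₀, ⟨h2, hs0⟩, rfl⟩,
        Or.inr ⟨v₀, ⟨h3, hs0'⟩, rfl⟩⟩

end CComp2

end HedgePump
namespace HedgePump

open Relation

lemma subgraph_trans {A B C : MixedGraph} (h1 : A.IsSubgraphOf B) (h2 : B.IsSubgraphOf C) :
    A.IsSubgraphOf C := by
  refine ⟨fun v hv => h2.1 (h1.1 hv), ?_, ?_⟩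
  · intro u v h
    obtain ⟨hb, hu, hv⟩ := h1.2.1 u v h
    exact ⟨(h2.2.1 u v hb).1, hu, hv⟩
  · intro u v h
    obtain ⟨hb, hu, hv⟩ := h1.2.2 u v h
    exact ⟨(h2.2.2 u v hb).1, hu, hv⟩

section Anc

variable {w : ℕ} {G : PeriodicCausalGraph w} {L : ℕ} {t s Δ : ℕ} {X Y : Set Vtx}

include G in
lemma anc_transform (hlat : G.HasLatency L) (hXfin : X.Finite)
    (htX : tmax X + L ≤ t) (htY : t < tmin Y)
    (hbeta : ∀ p : Vtx, p.1 < w → t < p.2 + L → p.2 ≤ t →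
      p ∈ ancestors (withoutInto G.dir X) Y → upv Δ p ∈ ancestors (withoutInto G.dir X) Y) :
    ∀ p y, ReflTransGen (withoutInto G.dir X) p y → y ∈ Y → p.2 ≤ t →
      p ∈ ancestors (withoutInto G.dir X) (shiftDown Δ Y) := by
  intro p y hp hy
  induction hp using ReflTransGen.head_induction_on with
  | refl =>
    intro hyt
    exfalso
    have := tmin_le hy
    omega
  | head hstep htail ih =>
    rename_i a c
    intro hat
    by_cases hct : c.2 ≤ t
    · obtain ⟨y', hy', hpath⟩ := ih hct
      exact ⟨y', hy', ReflTransGen.head hstep hpath⟩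
    · obtain ⟨hd, hnx⟩ := hstep
      have hrow : a.1 < w := (G.dir_row a c hd).1
      have hfw := G.dir_forward a c hd
      have hdist := (dist_le_iff.mp (hlat.1 a c hd)).2
      have hblk : t < a.2 + L := by omega
      have hanc_a : a ∈ ancestors (withoutInto G.dir X) Y :=
        ⟨y, hy, ReflTransGen.head ⟨hd, hnx⟩ htail⟩
      obtain ⟨y₂, hy₂, hpath₂⟩ := hbeta a hrow hblk hat hanc_a
      have hshift := ancestors_path_dn G hlat X hXfin Δ hpath₂
        (by show tmax X + Δ < a.2 + Δ; omega)
      rw [dn_upv] at hshift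
      exact ⟨dn Δ y₂, mem_shiftDown hy₂, hshift⟩

end Anc

section Assemble

variable {w : ℕ} {G : PeriodicCausalGraph w} {L : ℕ} {t s Δ : ℕ} {X Y : Set Vtx}
variable {F F' : MixedGraph}

theorem glue_hedge (hlat : G.HasLatency L) (hXfin : X.Finite)
    (hh : IsHedge G.whole X Y F F')
    (hs : s + L = t + Δ) (h2L : 2 * L ≤ L + Δ) (hL1 : 1 ≤ L) (hLt : L ≤ t)
    (htX : tmax X + L ≤ t) (hsX : tmax X + Δ ≤ s) (htY : t < tmin Y)
    (hmemF : ∀ v : Vtx, v.1 < w → t < v.2 + L → v.2 ≤ t → (v ∈ F.verts ↔ upv Δ v ∈ F.verts))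
    (hlcF : ∀ u v : Vtx, t < u.2 + L → u.2 ≤ t → t < v.2 + L → v.2 ≤ t →
      upv Δ u ∈ F.verts → upv Δ v ∈ F.verts →
      leftConnected F (t + Δ) (upv Δ u) (upv Δ v) → leftConnected F t u v)
    (hmemF' : ∀ v : Vtx, v.1 < w → t < v.2 + L → v.2 ≤ t → (v ∈ F'.verts ↔ upv Δ v ∈ F'.verts))
    (hlcF' : ∀ u v : Vtx, t < u.2 + L → u.2 ≤ t → t < v.2 + L → v.2 ≤ t →
      upv Δ u ∈ F'.verts → upv Δ v ∈ F'.verts →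
      leftConnected F' (t + Δ) (upv Δ u) (upv Δ v) → leftConnected F' t u v)
    (hbeta : ∀ p : Vtx, p.1 < w → t < p.2 + L → p.2 ≤ t →
      p ∈ ancestors (withoutInto G.dir X) Y → upv Δ p ∈ ancestors (withoutInto G.dir X) Y) :
    IsHedge G.whole X (shiftDown Δ Y) (glue L F t s Δ) (glue L F' t s Δ) := by
  obtain ⟨hFsub, hF'F, hFfin, hXFF', hFcf, hF'cf, hroots, hanc⟩ := hh
  have hsub' : F'.IsSubgraphOf G.whole := subgraph_trans hF'F hFsub
  refine ⟨glue_subgraph hlat hFsub hs hLt, glue_mono hlat hFsub hF'F, glue_finite hFfin,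
    ?_, ?_, ?_, ?_, ?_⟩
  · -- X inside glue F, outside glue F'
    intro x hx
    obtain ⟨hxF, hxF'⟩ := hXFF' hx
    have hxt : x.2 ≤ tmax X := le_tmax hXfin hx
    constructor
    · exact Or.inl ⟨hxF, by omega⟩
    · rintro (⟨hxin, -⟩ | ⟨v₀, ⟨hv₀, hs₀⟩, he⟩)
      · exact hxF' hxin
      · have h2 : (dn Δ v₀).2 = v₀.2 - Δ := rfl
        rw [he] at h2
        omega
  · exact ⟨glue_ccomp hlat hFsub hs h2L hL1 hLt hFcf.1 hmemF hlcF,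
      glue_forest hs hLt hFcf.2⟩
  · exact ⟨glue_ccomp hlat hsub' hs h2L hL1 hLt hF'cf.1 hmemF' hlcF',
      glue_forest hs hLt hF'cf.2⟩
  · rw [glue_roots hs hL1 hLt hmemF hFsub.1 hFcf.2,
      glue_roots hs hL1 hLt hmemF' hsub'.1 hF'cf.2, hroots]
  · rw [glue_roots hs hL1 hLt hmemF hFsub.1 hFcf.2]
    rintro r (⟨hrF, hblk⟩ | ⟨r₀, ⟨hr₀, hr₀s⟩, rfl⟩)
    · obtain ⟨y, hy, hpath⟩ := hanc hrF
      exact anc_transform hlat hXfin htX htY hbeta r y hpath hy (by omega)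
    · obtain ⟨y, hy, hpath⟩ := hanc hr₀
      have hshift := ancestors_path_dn G hlat X hXfin Δ hpath
        (by omega : tmax X + Δ < r₀.2)
      exact ⟨dn Δ y, mem_shiftDown hy, hshift⟩

end Assemble

end HedgePump
namespace HedgePump

open Relation

variable {w L : ℕ}

/-- the vertex of block `(b, b+L]` with row `p.1` and layer `b+1+p.2` -/
def bvtx (b : ℕ) (p : Fin w × Fin L) : Vtx := (p.1.val, b + 1 + p.2.val)

def enc (p : Fin w × Fin L) : Fin (w * L) :=
  ⟨p.1.val * L + p.2.val, by
    have h1 := p.2.2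
    have h2 : p.1.val + 1 ≤ w := p.1.2
    calc p.1.val * L + p.2.val < p.1.val * L + L := by omega
      _ = (p.1.val + 1) * L := by ring
      _ ≤ w * L := Nat.mul_le_mul_right L h2⟩

lemma enc_inj {p q : Fin w × Fin L} (h : enc p = enc q) : p = q := by
  have hv : p.1.val * L + p.2.val = q.1.val * L + q.2.val := congrArg Fin.val h
  have h1 := p.2.2
  have h2 := q.2.2
  have hfst : p.1.val = q.1.val := by
    rcases Nat.lt_trichotomy p.1.val q.1.val with hlt | heq | hgt
    · exfalso
      have : (p.1.val + 1) * L ≤ q.1.val * L := Nat.mul_le_mul_right L hlt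
      have he : (p.1.val + 1) * L = p.1.val * L + L := by ring
      omega
    · exact heq
    · exfalso
      have : (q.1.val + 1) * L ≤ p.1.val * L := Nat.mul_le_mul_right L hgt
      have he : (q.1.val + 1) * L = q.1.val * L + L := by ring
      omega
  have hsnd : p.2.val = q.2.val := by
    rw [hfst] at hv; omega
  ext
  · exact hfst
  · exact hsnd

lemma min'_eq_min' {α : Type*} [LinearOrder α] {s₁ s₂ : Finset α} (h : s₁ = s₂)
    (h₁ : s₁.Nonempty) (h₂ : s₂.Nonempty) : s₁.min' h₁ = s₂.min' h₂ := by
  subst h; rfl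

open Classical in
lemma filt_ne (F : MixedGraph) (b : ℕ) (p : Fin w × Fin L) :
    ((Finset.univ.filter
      (fun q : Fin w × Fin L => leftConnected F (b + L) (bvtx b q) (bvtx b p))).image enc).Nonempty := by
  refine Finset.Nonempty.image ⟨p, Finset.mem_filter.mpr ⟨Finset.mem_univ p, ?_⟩⟩ enc
  exact ReflTransGen.refl

open Classical in
/-- connectivity signature of the block `(b, b+L]` for the graph `F`:
`none` if the vertex is not in `F`, otherwise the minimal member of its
left-connected class within the block. -/
noncomputable def sigC (F : MixedGraph) (b : ℕ) (p : Fin w × Fin L) : Option (Fin (w * L)) :=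
  if bvtx b p ∈ F.verts then
    some ((((Finset.univ.filter
        (fun q : Fin w × Fin L => leftConnected F (b + L) (bvtx b q) (bvtx b p)))).image enc).min'
      (filt_ne F b p))
  else none

open Classical in
lemma sigC_isSome_iff {F : MixedGraph} {b : ℕ} {p : Fin w × Fin L} :
    (sigC F b p).isSome ↔ bvtx b p ∈ F.verts := by
  unfold sigC
  by_cases h : bvtx b p ∈ F.verts <;> simp [h]

open Classical in
lemma sigC_eq_of_lc {F : MixedGraph} {b : ℕ} {p q : Fin w × Fin L}
    (hp : bvtx b p ∈ F.verts) (hq : bvtx b q ∈ F.verts)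
    (h : leftConnected F (b + L) (bvtx b p) (bvtx b q)) :
    sigC F b p = sigC F b q := by
  have hfil : (Finset.univ.filter
        (fun r : Fin w × Fin L => leftConnected F (b + L) (bvtx b r) (bvtx b p)))
      = (Finset.univ.filter
        (fun r => leftConnected F (b + L) (bvtx b r) (bvtx b q))) := by
    apply Finset.filter_congr
    intro r _
    constructor
    · intro hr; exact hr.trans h
    · intro hr; exact hr.trans (lc_symm h)
  unfold sigC
  rw [if_pos hp, if_pos hq]
  congr 1
  exact min'_eq_min' (by rw [hfil]) _ _

open Classical in
lemma lc_of_sigC_eq {F : MixedGraph} {b : ℕ} {p q : Fin w × Fin L}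
    (hp : bvtx b p ∈ F.verts) (heq : sigC F b p = sigC F b q) :
    leftConnected F (b + L) (bvtx b p) (bvtx b q) := by
  have hq : bvtx b q ∈ F.verts := by
    have h1 : (sigC F b p).isSome := sigC_isSome_iff.mpr hp
    rw [heq] at h1
    exact sigC_isSome_iff.mp h1
  unfold sigC at heq
  rw [if_pos hp, if_pos hq] at heq
  have heq' := Option.some.inj heq
  have hm₁ := Finset.min'_mem _ (filt_ne F b p)
  have hm₂ := Finset.min'_mem _ (filt_ne F b q)
  rw [heq'] at hm₁
  obtain ⟨r₁, hr₁, he₁⟩ := Finset.mem_image.mp hm₁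
  obtain ⟨r₂, hr₂, he₂⟩ := Finset.mem_image.mp hm₂
  have hr : r₁ = r₂ := enc_inj (by rw [he₁, he₂])
  have hl₁ : leftConnected F (b + L) (bvtx b r₁) (bvtx b p) := (Finset.mem_filter.mp hr₁).2
  have hl₂ : leftConnected F (b + L) (bvtx b r₂) (bvtx b q) := (Finset.mem_filter.mp hr₂).2
  exact (lc_symm hl₁).trans (hr ▸ hl₂)

open Classical in
noncomputable def sigB {w' : ℕ} (G : PeriodicCausalGraph w') (X Y : Set Vtx) (b : ℕ)
    (p : Fin w × Fin L) : Bool :=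
  decide (bvtx b p ∈ ancestors (withoutInto G.dir X) Y)

end HedgePump
namespace HedgePump

open Relation

section Pump

variable {w L : ℕ} {G : PeriodicCausalGraph w} {X Y : Set Vtx}

lemma pump (hlat : G.HasLatency L) (hL1 : 1 ≤ L) (hw : 1 ≤ w)
    (hXfin : X.Finite) (hXY : tmax X ≤ tmin Y)
    (hbig : L * 2 ^ (L * w) * (L * w + 1) ^ (2 * L * w + 2) < tmin Y - tmax X)
    (h : HedgeExists G.whole X Y) :
    ∃ Δ : ℕ, 1 ≤ Δ ∧ Δ ≤ tmin Y - tmax X ∧ HedgeExists G.whole X (shiftDown Δ Y) := by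
  classical
  obtain ⟨F, F', hh⟩ := h
  set a := tmax X with ha
  set S := Fintype.card ((Fin w × Fin L) → Option (Fin (w * L)) × Option (Fin (w * L)) × Bool)
    with hSdef
  -- pigeonhole
  obtain ⟨e₁, e₂, hne, hfe⟩ := Fintype.exists_ne_map_eq_of_card_lt
    (fun e : Fin (S + 1) => (fun p : Fin w × Fin L =>
      (sigC F (a + 2 * e.val * L) p, sigC F' (a + 2 * e.val * L) p,
       sigB G X Y (a + 2 * e.val * L) p)))
    (by rw [Fintype.card_fin]; omega)
  obtain ⟨i, j, hij, hfij⟩ : ∃ i j : Fin (S + 1), i.val < j.val ∧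
      (fun p : Fin w × Fin L =>
        (sigC F (a + 2 * i.val * L) p, sigC F' (a + 2 * i.val * L) p,
         sigB G X Y (a + 2 * i.val * L) p)) =
      (fun p : Fin w × Fin L =>
        (sigC F (a + 2 * j.val * L) p, sigC F' (a + 2 * j.val * L) p,
         sigB G X Y (a + 2 * j.val * L) p)) := by
    rcases lt_trichotomy e₁.val e₂.val with h' | h' | h'
    · exact ⟨e₁, e₂, h', hfe⟩
    · exact absurd (Fin.val_injective h') hne
    · exact ⟨e₂, e₁, h', hfe.symm⟩
  -- numeric key inequality
  have hm1 : 1 ≤ L * w := Nat.one_le_iff_ne_zero.mpr (by positivity)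
  have hS' : S = ((w * L + 1) * ((w * L + 1) * 2)) ^ (w * L) := by
    rw [hSdef]
    simp [Fintype.card_fun]
  have hSS : S = 2 ^ (L * w) * (L * w + 1) ^ (2 * (L * w)) := by
    rw [hS', Nat.mul_comm w L,
      show (L * w + 1) * ((L * w + 1) * 2) = 2 * (L * w + 1) ^ 2 by ring,
      mul_pow, ← pow_mul]
  have hS1 : 1 ≤ S := by
    rw [hSS]
    have : 0 < 2 ^ (L * w) * (L * w + 1) ^ (2 * (L * w)) := by positivity
    omega
  have h4 : 4 ≤ (L * w + 1) ^ 2 := by nlinarith [hm1]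
  have h6 : 2 * S + 1 ≤ S * (L * w + 1) ^ 2 := by nlinarith [Nat.mul_le_mul_left S h4]
  have hkey : (2 * S + 1) * L ≤ L * 2 ^ (L * w) * (L * w + 1) ^ (2 * L * w + 2) := by
    calc (2 * S + 1) * L ≤ (S * (L * w + 1) ^ 2) * L := Nat.mul_le_mul_right L h6
      _ = L * 2 ^ (L * w) * (L * w + 1) ^ (2 * L * w + 2) := by rw [hSS]; ring
  -- extract opaque block positions
  obtain ⟨b, b', hab, hbb, hb'top, hsig⟩ :
      ∃ b b' : ℕ, a ≤ b ∧ b + 2 * L ≤ b' ∧ b' + L ≤ a + (2 * S + 1) * L ∧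
        ∀ p : Fin w × Fin L,
          sigC F b p = sigC F b' p ∧ sigC F' b p = sigC F' b' p ∧
          sigB G X Y b p = sigB G X Y b' p := by
    refine ⟨a + 2 * i.val * L, a + 2 * j.val * L, Nat.le_add_right _ _, ?_, ?_, ?_⟩
    · have := Nat.mul_le_mul_right L (show 2 * i.val + 2 ≤ 2 * j.val by omega)
      linarith [this]
    · have hj : j.val ≤ S := by omega
      have := Nat.mul_le_mul_right L (show 2 * j.val + 1 ≤ 2 * S + 1 by omega)
      linarith [this]
    · intro p
      have h1 := congrFun hfij p
      exact ⟨congrArg Prod.fst h1, congrArg (fun z => z.2.1) h1, congrArg (fun z => z.2.2) h1⟩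
  set Cv := L * 2 ^ (L * w) * (L * w + 1) ^ (2 * L * w + 2) with hCv
  set P := (2 * S + 1) * L with hP
  -- from here on everything is linear in the atoms
  have htY : b + L < tmin Y := by omega
  have hΔbound : b' - b ≤ tmin Y - tmax X := by omega
  -- matching transfer lemmas
  have hmem_of : ∀ (Fg : MixedGraph), (∀ p : Fin w × Fin L, sigC Fg b p = sigC Fg b' p) →
      ∀ v : Vtx, v.1 < w → b + L < v.2 + L → v.2 ≤ b + L →
        (v ∈ Fg.verts ↔ upv (b' - b) v ∈ Fg.verts) := by
    intro Fg hsg v hrow h1 h2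
    have hb1 : b < v.2 := by omega
    have hv : bvtx b ((⟨v.1, hrow⟩, ⟨v.2 - (b + 1), by omega⟩) : Fin w × Fin L) = v := by
      obtain ⟨r, c⟩ := v
      have hb1' : b < c := hb1
      have h2' : c ≤ b + L := h2
      show ((r : ℕ), b + 1 + (c - (b + 1))) = (r, c)
      congr 1
      omega
    have hv' : bvtx b' ((⟨v.1, hrow⟩, ⟨v.2 - (b + 1), by omega⟩) : Fin w × Fin L)
        = upv (b' - b) v := by
      obtain ⟨r, c⟩ := v
      have hb1' : b < c := hb1
      have h2' : c ≤ b + L := h2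
      show ((r : ℕ), b' + 1 + (c - (b + 1))) = (r, c + (b' - b))
      congr 1
      omega
    constructor
    · intro hvF
      have hsome : (sigC Fg b ((⟨v.1, hrow⟩, ⟨v.2 - (b + 1), by omega⟩) :
          Fin w × Fin L)).isSome := sigC_isSome_iff.mpr (by rw [hv]; exact hvF)
      rw [hsg _] at hsome
      have := sigC_isSome_iff.mp hsome
      rwa [hv'] at this
    · intro hvF
      have hsome : (sigC Fg b' ((⟨v.1, hrow⟩, ⟨v.2 - (b + 1), by omega⟩) :
          Fin w × Fin L)).isSome := sigC_isSome_iff.mpr (by rw [hv']; exact hvF)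
      rw [← hsg _] at hsome
      have := sigC_isSome_iff.mp hsome
      rwa [hv] at this
  have hlc_of : ∀ (Fg : MixedGraph), (∀ p : Fin w × Fin L, sigC Fg b p = sigC Fg b' p) →
      Fg.verts ⊆ {v : Vtx | v.1 < w} →
      ∀ u v : Vtx, b + L < u.2 + L → u.2 ≤ b + L → b + L < v.2 + L → v.2 ≤ b + L →
      upv (b' - b) u ∈ Fg.verts → upv (b' - b) v ∈ Fg.verts →
      leftConnected Fg (b + L + (b' - b)) (upv (b' - b) u) (upv (b' - b) v) →
      leftConnected Fg (b + L) u v := by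
    intro Fg hsg hrows u v hu1 hu2 hv1 hv2 huF hvF hlcc
    have hurow : u.1 < w := by
      have h := hrows huF
      exact h
    have hvrow : v.1 < w := by
      have h := hrows hvF
      exact h
    have hbu : b < u.2 := by omega
    have hbv : b < v.2 := by omega
    set pu : Fin w × Fin L := (⟨u.1, hurow⟩, ⟨u.2 - (b + 1), by omega⟩) with hpu
    set pv : Fin w × Fin L := (⟨v.1, hvrow⟩, ⟨v.2 - (b + 1), by omega⟩) with hpv
    have hbu' : b < u.2 := hbu
    have hbv' : b < v.2 := hbv
    have hu2' : u.2 ≤ b + L := hu2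
    have hv2' : v.2 ≤ b + L := hv2
    have hvu : bvtx b pu = u := by
      show ((u.1 : ℕ), b + 1 + (u.2 - (b + 1))) = u
      obtain ⟨r, c⟩ := u
      have h1 : b < c := hbu'
      have h2 : c ≤ b + L := hu2'
      congr 1
      omega
    have hvv : bvtx b pv = v := by
      show ((v.1 : ℕ), b + 1 + (v.2 - (b + 1))) = v
      obtain ⟨r, c⟩ := v
      have h1 : b < c := hbv'
      have h2 : c ≤ b + L := hv2'
      congr 1
      omega
    have hvu' : bvtx b' pu = upv (b' - b) u := by
      show ((u.1 : ℕ), b' + 1 + (u.2 - (b + 1))) = (u.1, u.2 + (b' - b))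
      obtain ⟨r, c⟩ := u
      have h1 : b < c := hbu'
      have h2 : c ≤ b + L := hu2'
      congr 1
      omega
    have hvv' : bvtx b' pv = upv (b' - b) v := by
      show ((v.1 : ℕ), b' + 1 + (v.2 - (b + 1))) = (v.1, v.2 + (b' - b))
      obtain ⟨r, c⟩ := v
      have h1 : b < c := hbv'
      have h2 : c ≤ b + L := hv2'
      congr 1
      omega
    rw [show b + L + (b' - b) = b' + L by omega] at hlcc
    have hstep1 : sigC Fg b' pu = sigC Fg b' pv := by
      apply sigC_eq_of_lc (by rw [hvu']; exact huF) (by rw [hvv']; exact hvF)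
      rw [hvu', hvv']
      exact hlcc
    have hstep2 : sigC Fg b pu = sigC Fg b pv := by
      rw [hsg pu, hsg pv]
      exact hstep1
    have hstep3 := lc_of_sigC_eq (F := Fg) (b := b) (p := pu) (q := pv) ?_ hstep2
    · rwa [hvu, hvv] at hstep3
    · rw [hvu]
      exact (hmem_of Fg hsg u hurow hu1 hu2).mpr huF
  have hbeta : ∀ p : Vtx, p.1 < w → b + L < p.2 + L → p.2 ≤ b + L →
      p ∈ ancestors (withoutInto G.dir X) Y →
      upv (b' - b) p ∈ ancestors (withoutInto G.dir X) Y := by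
    intro v hrow h1 h2 hanc
    have hb1 : b < v.2 := by omega
    have hv : bvtx b ((⟨v.1, hrow⟩, ⟨v.2 - (b + 1), by omega⟩) : Fin w × Fin L) = v := by
      obtain ⟨r, c⟩ := v
      have hb1' : b < c := hb1
      have h2' : c ≤ b + L := h2
      show ((r : ℕ), b + 1 + (c - (b + 1))) = (r, c)
      congr 1
      omega
    have hv' : bvtx b' ((⟨v.1, hrow⟩, ⟨v.2 - (b + 1), by omega⟩) : Fin w × Fin L)
        = upv (b' - b) v := by
      obtain ⟨r, c⟩ := v
      have hb1' : b < c := hb1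
      have h2' : c ≤ b + L := h2
      show ((r : ℕ), b' + 1 + (c - (b + 1))) = (r, c + (b' - b))
      congr 1
      omega
    have hB := (hsig ((⟨v.1, hrow⟩, ⟨v.2 - (b + 1), by omega⟩) : Fin w × Fin L)).2.2
    simp only [sigB] at hB
    rw [decide_eq_decide] at hB
    rw [hv, hv'] at hB
    exact hB.mp hanc
  -- assemble the hedge
  refine ⟨b' - b, by omega, hΔbound, glue L F (b + L) b' (b' - b),
    glue L F' (b + L) b' (b' - b), ?_⟩
  have hFsub := hh.1
  have hF'F := hh.2.1
  have hsub' : F'.IsSubgraphOf G.whole := subgraph_trans hF'F hFsub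
  exact glue_hedge hlat hXfin hh (by omega) (by omega) hL1 (by omega)
    (by omega) (by omega) htY
    (hmem_of F (fun p => (hsig p).1))
    (hlc_of F (fun p => (hsig p).1) hFsub.1)
    (hmem_of F' (fun p => (hsig p).2.1))
    (hlc_of F' (fun p => (hsig p).2.1) hsub'.1)
    hbeta

end Pump

end HedgePump
namespace HedgePump

open Relation

section LZero

variable {w : ℕ} {G : PeriodicCausalGraph w}

lemma exists_root {F : MixedGraph} (hsub : F.IsSubgraphOf G.whole)
    (hfin : F.verts.Finite) {x : Vtx} (hx : x ∈ F.verts) : F.roots.Nonempty := by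
  classical
  by_contra hno
  rw [Set.not_nonempty_iff_eq_empty] at hno
  have hch : ∀ v : F.verts, ∃ u : F.verts, F.dir v.val u.val := by
    rintro ⟨v, hv⟩
    have : v ∉ F.roots := by rw [hno]; exact Set.notMem_empty v
    simp only [MixedGraph.roots, Set.mem_setOf_eq, not_and, not_forall, not_not] at this
    obtain ⟨u, hu⟩ := this hv
    exact ⟨⟨u, (hsub.2.1 v u hu).2.2⟩, hu⟩
  choose g hg using hch
  haveI : Finite F.verts := hfin.to_subtype
  set seq : ℕ → F.verts := fun n => g^[n] ⟨x, hx⟩ with hseq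
  have hstep : ∀ k, F.dir (seq k).val (seq (k + 1)).val := by
    intro k
    have : seq (k + 1) = g (seq k) := by
      rw [hseq]
      exact Function.iterate_succ_apply' g k _
    rw [this]
    exact hg (seq k)
  have hchain : ∀ d k, TransGen F.dir (seq k).val (seq (k + d + 1)).val := by
    intro d
    induction d with
    | zero => intro k; exact TransGen.single (hstep k)
    | succ d ihd =>
      intro k
      exact TransGen.tail (ihd k) (hstep (k + d + 1))
  obtain ⟨m, n, hmn, he⟩ := Finite.exists_ne_map_eq_of_infinite seq
  have hcyc : ∃ v : Vtx, TransGen F.dir v v := by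
    rcases Nat.lt_or_ge m n with hlt | hge
    · refine ⟨(seq n).val, ?_⟩
      have := hchain (n - m - 1) m
      rw [show m + (n - m - 1) + 1 = n by omega, he] at this
      exact this
    · have hlt : n < m := by omega
      refine ⟨(seq m).val, ?_⟩
      have := hchain (m - n - 1) n
      rw [show n + (m - n - 1) + 1 = m by omega, ← he] at this
      exact this
  obtain ⟨v, hv⟩ := hcyc
  exact G.acyclic v (TransGen.mono (fun a b h => (hsub.2.1 a b h).1) _ _ hv)

lemma rtg_layer_eq (hlat : G.HasLatency 0) (X : Set Vtx) :
    ∀ p y : Vtx, ReflTransGen (withoutInto G.dir X) p y → p.2 = y.2 := by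
  intro p y h
  induction h with
  | refl => rfl
  | tail hseg hstep ihs =>
    rename_i c d
    have := hlat.1 _ _ hstep.1
    simp [Nat.dist] at this
    omega

lemma L0_case (hlat : G.HasLatency 0) {X Y : Set Vtx}
    (hXne : X.Nonempty) (hXfin : X.Finite) (hYfin : Y.Finite)
    (h : HedgeExists G.whole X Y) : tmin Y ≤ tmax X := by
  obtain ⟨F, F', hh⟩ := h
  obtain ⟨hFsub, hF'F, hFfin, hXFF', hFcf, hF'cf, hroots, hanc⟩ := hh
  obtain ⟨x, hxX⟩ := hXne
  have hxF : x ∈ F.verts := (hXFF' hxX).1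
  have hsame : ∀ v ∈ F.verts, v.2 = x.2 := by
    intro v hv
    have hpath := hFcf.1 x hxF v hv
    induction hpath with
    | refl => rfl
    | tail hseg hstep ihs =>
      rename_i c d
      have hcd : c.2 = d.2 := by
        rcases hstep with hbi | hbi
        · have := hlat.2 c d (hFsub.2.2 c d hbi).1
          simp [Nat.dist] at this
          omega
        · have := hlat.2 d c (hFsub.2.2 d c hbi).1
          simp [Nat.dist] at this
          omega
      have hcF : c ∈ F.verts := by
        rcases hstep with hbi | hbi
        · exact (hFsub.2.2 c d hbi).2.1
        · exact (hFsub.2.2 d c hbi).2.2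
      rw [← hcd]
      exact ihs hcF
  obtain ⟨r, hr⟩ := exists_root hFsub hFfin hxF
  obtain ⟨y, hy, hpath⟩ := hanc hr
  have hyr : r.2 = y.2 := rtg_layer_eq hlat X r y hpath
  have h1 : tmin Y ≤ y.2 := tmin_le hy
  have h2 : r.2 = x.2 := hsame r hr.1
  have h3 : x.2 ≤ tmax X := le_tmax hXfin hxX
  omega

end LZero

section Main

lemma main_aux {w L : ℕ} (G : PeriodicCausalGraph w) (hlat : G.HasLatency L)
    (X : Set Vtx) (hXfin : X.Finite) (hXne : X.Nonempty) (hX : X ⊆ G.whole.verts) :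
    ∀ n (Y : Set Vtx), tmin Y = n → Y.Finite → Y.Nonempty →
      tmax X ≤ tmin Y → HedgeExists G.whole X Y →
      ∃ Δ : ℕ, Δ ≤ tmin Y - tmax X ∧
        layerDist X (shiftDown Δ Y) ≤ L * 2 ^ (L * w) * (L * w + 1) ^ (2 * L * w + 2) ∧
        HedgeExists G.whole X (shiftDown Δ Y) := by
  intro n
  induction n using Nat.strong_induction_on with
  | _ n ih =>
    intro Y htm hYfin hYne hXY hhe
    by_cases hsmall : tmin Y - tmax X ≤ L * 2 ^ (L * w) * (L * w + 1) ^ (2 * L * w + 2)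
    · refine ⟨0, Nat.zero_le _, ?_, ?_⟩
      · rw [shiftDown_zero]
        obtain ⟨x₀, hx₀, hx₀e⟩ := tmax_mem hXfin hXne
        obtain ⟨y₀, hy₀, hy₀e⟩ := tmin_mem hYne
        have hld : layerDist X Y ≤ Nat.dist x₀.2 y₀.2 := Nat.sInf_le ⟨x₀, hx₀, y₀, hy₀, rfl⟩
        have hd : Nat.dist x₀.2 y₀.2 = tmin Y - tmax X := by
          rw [hx₀e, hy₀e]
          simp [Nat.dist]
          omega
        omega
      · rw [shiftDown_zero]
        exact hhe
    · push_neg at hsmall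
      have hL1 : 1 ≤ L := by
        by_contra hL0
        have hL0' : L = 0 := by omega
        subst hL0'
        have := L0_case hlat hXne hXfin hYfin hhe
        simp at hsmall
        omega
      have hw : 1 ≤ w := by
        obtain ⟨x, hx⟩ := hXne
        have hxw : x.1 < w := hX hx
        omega
      obtain ⟨Δ₁, hΔ1, hΔle, hhe'⟩ := pump hlat hL1 hw hXfin hXY hsmall hhe
      have hΔtm : Δ₁ ≤ tmin Y := by omega
      have htm' : tmin (shiftDown Δ₁ Y) = tmin Y - Δ₁ := tmin_shiftDown hYne hΔtm
      have hlt : tmin Y - Δ₁ < n := by omega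
      obtain ⟨Δ₂, h2a, h2b, h2c⟩ := ih (tmin Y - Δ₁) hlt (shiftDown Δ₁ Y) htm'
        (hYfin.image _) (hYne.image _) (by omega) hhe'
      rw [htm'] at h2a
      rw [shiftDown_shiftDown] at h2b h2c
      exact ⟨Δ₁ + Δ₂, by omega, h2b, h2c⟩

end Main

end HedgePump
/-- Proposition `prop:future`, second form. If a hedge for `X, Y` exists
in `G` and `tmax X ≤ tmin Y`, then there is `Δ ≤ tmin Y - tmax X` such that
`dist(X, Y_{-Δ}) ≤ C` and a hedge for `X, Y_{-Δ}` exists in `G`. -/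
theorem hedge_shiftDown_close_exists {w L : ℕ} (G : PeriodicCausalGraph w)
    (hlat : G.HasLatency L) (X Y : Set Vtx)
    (hX : X ⊆ G.whole.verts) (hY : Y ⊆ G.whole.verts) (hdisj : Disjoint X Y)
    (hXfin : X.Finite) (hYfin : Y.Finite) (hXne : X.Nonempty) (hYne : Y.Nonempty)
    (C : ℕ) (hC : C = L * 2 ^ (L * w) * (L * w + 1) ^ (2 * L * w + 2))
    (hXY : tmax X ≤ tmin Y) (h : HedgeExists G.whole X Y) :
    ∃ Δ : ℕ, Δ ≤ tmin Y - tmax X ∧ layerDist X (shiftDown Δ Y) ≤ C ∧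
      HedgeExists G.whole X (shiftDown Δ Y) := by
  obtain ⟨Δ, h1, h2, h3⟩ :=
    HedgePump.main_aux G hlat X hXfin hXne hX (tmin Y) Y rfl hYfin hYne hXY h
  exact ⟨Δ, h1, by rw [hC]; exact h2, h3⟩
end

section
/- Let G be a periodic causal graph and let (F, F') be a hedge for disjoint finite nonempty vertex sets X, Y in G. Then every vertex of F has layer at most tmax(Y); in particular, F and F' are subgraphs of the segment G[0, tmax(Y)]. -/
open Relation

/-- Every vertex of a hedge for `X, Y` has layer at most `tmax Y`;
in particular both C-forests of the hedge are subgraphs of the segment `G[0, tmax Y]`. -/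
theorem hedge_in_past_segment {w : ℕ} (G : PeriodicCausalGraph w) (X Y : Set Vtx)
    (hX : X ⊆ G.whole.verts) (hY : Y ⊆ G.whole.verts) (hdisj : Disjoint X Y)
    (hXfin : X.Finite) (hYfin : Y.Finite) (hXne : X.Nonempty) (hYne : Y.Nonempty)
    (F F' : MixedGraph) (hH : IsHedge G.whole X Y F F') :
    (∀ v ∈ F.verts, v.2 ≤ tmax Y) ∧
      F.IsSubgraphOf (G.segment 0 (tmax Y)) ∧
      F'.IsSubgraphOf (G.segment 0 (tmax Y)) := by
  obtain ⟨hFH, hF'F, hFfin, hXsub, hFcf, hF'cf, hroots, hrootsAn⟩ := hH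
  have hdirG : ∀ u v, F.dir u v → G.dir u v := fun u v h => (hFH.2.1 u v h).1
  have hmem : ∀ u v, F.dir u v → u ∈ F.verts ∧ v ∈ F.verts :=
    fun u v h => (hFH.2.1 u v h).2
  have hYbd : ∀ y ∈ Y, y.2 ≤ tmax Y := by
    intro y hy
    exact le_csSup ((hYfin.image _).bddAbove) ⟨y, hy, rfl⟩
  have hrootbd : ∀ r ∈ F.roots, r.2 ≤ tmax Y := by
    intro r hr
    obtain ⟨y, hy, hpath⟩ := hrootsAn hr
    have hry : r.2 ≤ y.2 := by
      clear hy
      induction hpath with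
      | refl => exact le_refl _
      | tail _ h2 ih => exact le_trans ih (G.dir_forward _ _ h2.1)
    exact le_trans hry (hYbd y hy)
  have key : ∀ v ∈ F.verts, ∃ ρ ∈ F.roots, Relation.ReflTransGen F.dir v ρ := by
    have H : ∀ n : ℕ, ∀ v ∈ F.verts,
        ({x ∈ F.verts | Relation.ReflTransGen F.dir v x}).ncard ≤ n →
        ∃ ρ ∈ F.roots, Relation.ReflTransGen F.dir v ρ := by
      intro n
      induction n with
      | zero =>
        intro v hv hc
        exfalso
        have hfin : ({x ∈ F.verts | Relation.ReflTransGen F.dir v x}).Finite :=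
          hFfin.subset (fun x hx => hx.1)
        have hpos : 0 < ({x ∈ F.verts | Relation.ReflTransGen F.dir v x}).ncard :=
          (Set.ncard_pos hfin).2 ⟨v, hv, Relation.ReflTransGen.refl⟩
        omega
      | succ n ih =>
        intro v hv hc
        by_cases hroot : ∀ u, ¬ F.dir v u
        · exact ⟨v, ⟨hv, hroot⟩, Relation.ReflTransGen.refl⟩
        · push_neg at hroot
          obtain ⟨u, hu⟩ := hroot
          have huF : u ∈ F.verts := (hmem v u hu).2
          have hsub : {x ∈ F.verts | Relation.ReflTransGen F.dir u x} ⊆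
              {x ∈ F.verts | Relation.ReflTransGen F.dir v x} := by
            rintro x ⟨hx1, hx2⟩
            exact ⟨hx1, Relation.ReflTransGen.head hu hx2⟩
          have hvnot : v ∉ {x ∈ F.verts | Relation.ReflTransGen F.dir u x} := by
            rintro ⟨-, hx2⟩
            exact G.acyclic v (Relation.TransGen.head' (hdirG v u hu)
              (Relation.ReflTransGen.mono hdirG _ _ hx2))
          have hss : {x ∈ F.verts | Relation.ReflTransGen F.dir u x} ⊂
              {x ∈ F.verts | Relation.ReflTransGen F.dir v x} := by
            refine ⟨hsub, fun h => hvnot (h ⟨hv, Relation.ReflTransGen.refl⟩)⟩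
          have hlt : ({x ∈ F.verts | Relation.ReflTransGen F.dir u x}).ncard <
              ({x ∈ F.verts | Relation.ReflTransGen F.dir v x}).ncard :=
            Set.ncard_lt_ncard hss (hFfin.subset (fun x hx => hx.1))
          obtain ⟨ρ, hρ, hpath⟩ := ih u huF (by omega)
          exact ⟨ρ, hρ, Relation.ReflTransGen.head hu hpath⟩
    intro v hv
    exact H _ v hv le_rfl
  have hbound : ∀ v ∈ F.verts, v.2 ≤ tmax Y := by
    intro v hv
    obtain ⟨ρ, hρ, hpath⟩ := key v hv
    have hvρ : v.2 ≤ ρ.2 := by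
      clear hρ
      induction hpath with
      | refl => exact le_refl _
      | tail _ h2 ih => exact le_trans ih (G.dir_forward _ _ (hdirG _ _ h2))
    exact le_trans hvρ (hrootbd ρ hρ)
  have hFseg : F.IsSubgraphOf (G.segment 0 (tmax Y)) := by
    refine ⟨?_, ?_, ?_⟩
    · intro v hv
      exact ⟨hFH.1 hv, Nat.zero_le _, hbound v hv⟩
    · intro u v h
      obtain ⟨huF, hvF⟩ := hmem u v h
      exact ⟨⟨hdirG u v h, ⟨Nat.zero_le _, hbound u huF⟩, ⟨Nat.zero_le _, hbound v hvF⟩⟩,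
        huF, hvF⟩
    · intro u v h
      obtain ⟨hb, huF, hvF⟩ := hFH.2.2 u v h
      exact ⟨⟨hb, ⟨Nat.zero_le _, hbound u huF⟩, ⟨Nat.zero_le _, hbound v hvF⟩⟩, huF, hvF⟩
  refine ⟨hbound, hFseg, ?_, ?_, ?_⟩
  · intro v hv
    exact hFseg.1 (hF'F.1 hv)
  · intro u v h
    obtain ⟨hF, hu, hv⟩ := hF'F.2.1 u v h
    exact ⟨(hFseg.2.1 u v hF).1, hu, hv⟩
  · intro u v h
    obtain ⟨hF, hu, hv⟩ := hF'F.2.2 u v h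
    exact ⟨(hFseg.2.2 u v hF).1, hu, hv⟩
end

section
/- Let G be a periodic causal graph and let X, Y be disjoint finite nonempty sets of vertices of G with tmin(X) > tmax(Y). Then no hedge for X, Y exists in G (so the causal effect P(Y | do X) is identifiable). -/
open Relation

/-- In a finite graph whose directed relation is acyclic, every vertex has a directed
path to a root. -/
lemma exists_root_aux (F : MixedGraph) (hfin : F.verts.Finite)
    (hmem : ∀ u v, F.dir u v → v ∈ F.verts)
    (hacyc : ∀ v, ¬ Relation.TransGen F.dir v v) :
    ∀ v ∈ F.verts, ∃ r ∈ F.roots, Relation.ReflTransGen F.dir v r := by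
  classical
  suffices H : ∀ n, ∀ v ∈ F.verts,
      (hfin.toFinset.filter (fun u => Relation.TransGen F.dir v u)).card ≤ n →
      ∃ r ∈ F.roots, Relation.ReflTransGen F.dir v r by
    intro v hv
    exact H _ v hv le_rfl
  intro n
  induction n with
  | zero =>
    intro v hv hcard
    refine ⟨v, ⟨hv, fun u hdir => ?_⟩, .refl⟩
    have hu : u ∈ hfin.toFinset.filter (fun u => Relation.TransGen F.dir v u) := by
      simp only [Finset.mem_filter, Set.Finite.mem_toFinset]
      exact ⟨hmem _ _ hdir, Relation.TransGen.single hdir⟩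
    have := Finset.card_pos.mpr ⟨u, hu⟩
    omega
  | succ n ih =>
    intro v hv hcard
    by_cases hchild : ∃ u, F.dir v u
    · obtain ⟨u, hdir⟩ := hchild
      have hu : u ∈ F.verts := hmem _ _ hdir
      have hsub : (hfin.toFinset.filter (fun x => Relation.TransGen F.dir u x)) ⊆
          (hfin.toFinset.filter (fun x => Relation.TransGen F.dir v x)).erase u := by
        intro x hx
        simp only [Finset.mem_filter, Set.Finite.mem_toFinset, Finset.mem_erase] at hx ⊢
        refine ⟨?_, hx.1, Relation.TransGen.head hdir hx.2⟩
        rintro rfl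
        exact hacyc _ hx.2
      have humem : u ∈ (hfin.toFinset.filter (fun x => Relation.TransGen F.dir v x)) := by
        simp only [Finset.mem_filter, Set.Finite.mem_toFinset]
        exact ⟨hu, Relation.TransGen.single hdir⟩
      have hc2 := Finset.card_le_card hsub
      rw [Finset.card_erase_of_mem humem] at hc2
      obtain ⟨r, hr, hpath⟩ := ih u hu (by omega)
      exact ⟨r, hr, Relation.ReflTransGen.head hdir hpath⟩
    · push_neg at hchild
      exact ⟨v, ⟨hv, hchild⟩, .refl⟩

lemma layer_mono {r : Vtx → Vtx → Prop} (h : ∀ u v, r u v → u.2 ≤ v.2)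
    {a b : Vtx} (hp : Relation.ReflTransGen r a b) : a.2 ≤ b.2 := by
  induction hp with
  | refl => exact le_rfl
  | tail _ hstep ih => exact le_trans ih (h _ _ hstep)

/-- If `tmin X > tmax Y`, then no hedge for `X, Y` exists in `G`
(so `P(Y | do X)` is identifiable). -/
theorem no_hedge_of_future {w : ℕ} (G : PeriodicCausalGraph w) (X Y : Set Vtx)
    (hX : X ⊆ G.whole.verts) (hY : Y ⊆ G.whole.verts) (hdisj : Disjoint X Y)
    (hXfin : X.Finite) (hYfin : Y.Finite) (hXne : X.Nonempty) (hYne : Y.Nonempty)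
    (hfut : tmax Y < tmin X) :
    ¬ HedgeExists G.whole X Y := by
  rintro ⟨F, F', hsubF, _hsubF', hFfin, hXsub, _hFcf, _hF'cf, _hroots, hanc⟩
  obtain ⟨x, hx⟩ := hXne
  have hxF : x ∈ F.verts := (hXsub hx).1
  have hdirG : ∀ u v, F.dir u v → G.dir u v := fun u v h => (hsubF.2.1 u v h).1
  have hmem : ∀ u v, F.dir u v → v ∈ F.verts := fun u v h => (hsubF.2.1 u v h).2.2
  have hacyc : ∀ v, ¬ Relation.TransGen F.dir v v := by
    intro v hv
    exact G.acyclic v (Relation.TransGen.mono hdirG v v hv)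
  obtain ⟨r, hr, hpath⟩ := exists_root_aux F hFfin hmem hacyc x hxF
  -- layer of x ≤ layer of r
  have hxr : x.2 ≤ r.2 :=
    layer_mono (fun u v h => G.dir_forward u v (hdirG u v h)) hpath
  -- r is an ancestor of some y ∈ Y
  obtain ⟨y, hy, hpath2⟩ := hanc hr
  have hry : r.2 ≤ y.2 :=
    layer_mono (fun u v h => G.dir_forward u v h.1) hpath2
  have hymax : y.2 ≤ tmax Y := by
    have : y.2 ∈ Prod.snd '' Y := ⟨y, hy, rfl⟩
    exact le_csSup (hYfin.image _).bddAbove this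
  have hxmin : tmin X ≤ x.2 := Nat.sInf_le ⟨x, hx, rfl⟩
  omega
end

section
/- Let G be a periodic causal graph of width w and latency L ≥ 1. Define a graph H on the vertex set {Y_{j,s} : 0 ≤ j ≤ Lw−1, s ∈ ℕ} via the bijection φ(X_{i,t}) = Y_{i + w·(t mod L), ⌊t/L⌋}, declaring (φ(V), φ(W)) to be a directed (respectively bidirected) edge of H exactly when (V, W) is a directed (respectively bidirected) edge of G. Then H is a periodic causal graph of width Lw and latency 1. -/
open Relation

lemma phiAgg_row_lt {w L : ℕ} (hL : 0 < L) {u : Vtx} (hu : u.1 < w) :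
    (phiAgg w L u).1 < L * w := by
  have h1 : u.2 % L < L := Nat.mod_lt _ hL
  simp only [phiAgg]
  nlinarith

lemma phiAgg_inj {w L : ℕ} (hL : 0 < L) {u v : Vtx} (hu : u.1 < w) (hv : v.1 < w)
    (h : phiAgg w L u = phiAgg w L v) : u = v := by
  simp only [phiAgg, Prod.mk.injEq] at h
  obtain ⟨h1, h2⟩ := h
  have e1 : u.2 % L = v.2 % L := by
    rcases lt_trichotomy (u.2 % L) (v.2 % L) with h | h | h
    · nlinarith
    · exact h
    · nlinarith
  have d1 := Nat.div_add_mod u.2 L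
  have d2 := Nat.div_add_mod v.2 L
  have e2 : u.2 = v.2 := by
    rw [← d1, ← d2, h2, e1]
  rw [e1] at h1
  exact Prod.ext (by omega) e2

lemma phiAgg_shift {w L : ℕ} (hL : 0 < L) (j s : ℕ) :
    phiAgg w L (j, s + L) = ((phiAgg w L (j, s)).1, (phiAgg w L (j, s)).2 + 1) := by
  simp [phiAgg, Nat.add_mod_right, Nat.add_div_right _ hL]

lemma dirShiftN {w : ℕ} (G : PeriodicCausalGraph w) (n : ℕ) :
    ∀ i t i' t', G.dir (i, t) (i', t') ↔ G.dir (i, t + n) (i', t' + n) := by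
  induction n with
  | zero => simp
  | succ n ih =>
    intro i t i' t'
    rw [ih, show t + (n + 1) = (t + n) + 1 from rfl,
      show t' + (n + 1) = (t' + n) + 1 from rfl, ← G.dir_shift]

lemma biShiftN {w : ℕ} (G : PeriodicCausalGraph w) (n : ℕ) :
    ∀ i t i' t', G.bi (i, t) (i', t') ↔ G.bi (i, t + n) (i', t' + n) := by
  induction n with
  | zero => simp
  | succ n ih =>
    intro i t i' t'
    rw [ih, show t + (n + 1) = (t + n) + 1 from rfl,
      show t' + (n + 1) = (t' + n) + 1 from rfl, ← G.bi_shift]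

lemma lift_transGen {w L : ℕ} (hL : 0 < L) (G : PeriodicCausalGraph w) :
    ∀ x y, Relation.TransGen
      (fun a b => ∃ u v, G.dir u v ∧ a = phiAgg w L u ∧ b = phiAgg w L v) x y →
      ∃ u v, u.1 < w ∧ v.1 < w ∧ x = phiAgg w L u ∧ y = phiAgg w L v ∧
        Relation.TransGen G.dir u v := by
  intro x y h
  induction h with
  | single h =>
    obtain ⟨u, v, h, ha, hb⟩ := h
    exact ⟨u, v, (G.dir_row _ _ h).1, (G.dir_row _ _ h).2, ha, hb, .single h⟩
  | tail _ h ih =>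
    obtain ⟨u, v, hu, hv, hx, hy, ht⟩ := ih
    obtain ⟨u', v', h', ha, hb⟩ := h
    have hvv : v = u' := phiAgg_inj hL hv (G.dir_row _ _ h').1 (hy.symm.trans ha)
    exact ⟨u, v', hu, (G.dir_row _ _ h').2, hx, hb, .tail ht (hvv ▸ h')⟩

lemma dist_div_le_one {L a b : ℕ} (hL : 0 < L) (h : Nat.dist a b ≤ L) :
    Nat.dist (a / L) (b / L) ≤ 1 := by
  wlog hab : a ≤ b
  · rw [Nat.dist_comm] at h ⊢
    exact this hL h (le_of_not_ge hab)
  have h1 : b ≤ a + L := by simp only [Nat.dist] at h; omega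
  have h2 : b / L ≤ a / L + 1 :=
    le_trans (Nat.div_le_div_right h1) (le_of_eq (Nat.add_div_right _ hL))
  have h3 : a / L ≤ b / L := Nat.div_le_div_right hab
  simp only [Nat.dist]; omega

/-- Aggregating `L` consecutive layers of a width-`w`, latency-`L`
periodic causal graph via `φ(X_{i,t}) = Y_{i + w·(t % L), ⌊t/L⌋}` yields a periodic
causal graph of width `L·w` and latency `1`. -/
theorem aggregated_graph_is_periodic {w L : ℕ} (hL : 1 ≤ L)
    (G : PeriodicCausalGraph w) (hlat : G.HasLatency L) :
    ∃ H : PeriodicCausalGraph (L * w),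
      (∀ a b : Vtx, H.dir a b ↔ ∃ u v, G.dir u v ∧ a = phiAgg w L u ∧ b = phiAgg w L v) ∧
      (∀ a b : Vtx, H.bi a b ↔ ∃ u v, G.bi u v ∧ a = phiAgg w L u ∧ b = phiAgg w L v) ∧
      H.HasLatency 1 := by
  have hL0 : 0 < L := hL
  refine ⟨⟨fun a b => ∃ u v, G.dir u v ∧ a = phiAgg w L u ∧ b = phiAgg w L v,
          fun a b => ∃ u v, G.bi u v ∧ a = phiAgg w L u ∧ b = phiAgg w L v,
          ?_, ?_, ?_, ?_, ?_, ?_, ?_⟩,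
    fun a b => Iff.rfl, fun a b => Iff.rfl, ?_, ?_⟩
  · rintro a b ⟨u, v, h, rfl, rfl⟩
    exact ⟨phiAgg_row_lt hL0 (G.dir_row _ _ h).1, phiAgg_row_lt hL0 (G.dir_row _ _ h).2⟩
  · rintro a b ⟨u, v, h, rfl, rfl⟩
    exact ⟨phiAgg_row_lt hL0 (G.bi_row _ _ h).1, phiAgg_row_lt hL0 (G.bi_row _ _ h).2⟩
  · rintro a b ⟨u, v, h, rfl, rfl⟩
    exact ⟨v, u, G.bi_symm _ _ h, rfl, rfl⟩
  · rintro a b ⟨u, v, h, rfl, rfl⟩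
    exact Nat.div_le_div_right (G.dir_forward _ _ h)
  · -- dir_shift
    intro i t i' t'
    constructor
    · rintro ⟨u, v, h, ha, hb⟩
      refine ⟨(u.1, u.2 + L), (v.1, v.2 + L),
        ((dirShiftN G L u.1 u.2 v.1 v.2).1 (by simpa using h)), ?_, ?_⟩
      · rw [phiAgg_shift hL0, ← ha]
      · rw [phiAgg_shift hL0, ← hb]
    · rintro ⟨u, v, h, ha, hb⟩
      have hu2 : L ≤ u.2 := by
        have : u.2 / L = t + 1 := congrArg Prod.snd ha.symm
        by_contra hc
        rw [Nat.div_eq_of_lt (by omega)] at this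
        omega
      have hv2 : L ≤ v.2 := by
        have : v.2 / L = t' + 1 := congrArg Prod.snd hb.symm
        by_contra hc
        rw [Nat.div_eq_of_lt (by omega)] at this
        omega
      refine ⟨(u.1, u.2 - L), (v.1, v.2 - L),
        ((dirShiftN G L u.1 (u.2 - L) v.1 (v.2 - L)).2 ?_), ?_, ?_⟩
      · have e1 : u.2 - L + L = u.2 := by omega
        have e2 : v.2 - L + L = v.2 := by omega
        rw [e1, e2]; simpa using h
      · have := phiAgg_shift (w := w) hL0 u.1 (u.2 - L)
        rw [show u.2 - L + L = u.2 by omega] at this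
        have hu' : phiAgg w L u = (i, t + 1) := ha.symm
        rw [show (u.1, u.2) = u from rfl] at this
        rw [hu'] at this
        simp only [Prod.mk.injEq] at this
        exact Prod.ext this.1 (by omega)
      · have := phiAgg_shift (w := w) hL0 v.1 (v.2 - L)
        rw [show v.2 - L + L = v.2 by omega] at this
        have hv' : phiAgg w L v = (i', t' + 1) := hb.symm
        rw [show (v.1, v.2) = v from rfl] at this
        rw [hv'] at this
        simp only [Prod.mk.injEq] at this
        exact Prod.ext this.1 (by omega)
  · -- bi_shift
    intro i t i' t'
    constructor
    · rintro ⟨u, v, h, ha, hb⟩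
      refine ⟨(u.1, u.2 + L), (v.1, v.2 + L),
        ((biShiftN G L u.1 u.2 v.1 v.2).1 (by simpa using h)), ?_, ?_⟩
      · rw [phiAgg_shift hL0, ← ha]
      · rw [phiAgg_shift hL0, ← hb]
    · rintro ⟨u, v, h, ha, hb⟩
      have hu2 : L ≤ u.2 := by
        have : u.2 / L = t + 1 := congrArg Prod.snd ha.symm
        by_contra hc
        rw [Nat.div_eq_of_lt (by omega)] at this
        omega
      have hv2 : L ≤ v.2 := by
        have : v.2 / L = t' + 1 := congrArg Prod.snd hb.symm
        by_contra hc
        rw [Nat.div_eq_of_lt (by omega)] at this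
        omega
      refine ⟨(u.1, u.2 - L), (v.1, v.2 - L),
        ((biShiftN G L u.1 (u.2 - L) v.1 (v.2 - L)).2 ?_), ?_, ?_⟩
      · have e1 : u.2 - L + L = u.2 := by omega
        have e2 : v.2 - L + L = v.2 := by omega
        rw [e1, e2]; simpa using h
      · have := phiAgg_shift (w := w) hL0 u.1 (u.2 - L)
        rw [show u.2 - L + L = u.2 by omega] at this
        have hu' : phiAgg w L u = (i, t + 1) := ha.symm
        rw [show (u.1, u.2) = u from rfl] at this
        rw [hu'] at this
        simp only [Prod.mk.injEq] at this
        exact Prod.ext this.1 (by omega)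
      · have := phiAgg_shift (w := w) hL0 v.1 (v.2 - L)
        rw [show v.2 - L + L = v.2 by omega] at this
        have hv' : phiAgg w L v = (i', t' + 1) := hb.symm
        rw [show (v.1, v.2) = v from rfl] at this
        rw [hv'] at this
        simp only [Prod.mk.injEq] at this
        exact Prod.ext this.1 (by omega)
  · -- acyclic
    intro x hx
    obtain ⟨u, v, hu, hv, hxu, hxv, ht⟩ := lift_transGen hL0 G x x hx
    have : u = v := phiAgg_inj hL0 hu hv (hxu.symm.trans hxv)
    exact G.acyclic u (this ▸ ht)
  · -- latency: dir
    rintro a b ⟨u, v, h, rfl, rfl⟩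
    exact dist_div_le_one hL0 (hlat.1 _ _ h)
  · -- latency: bi
    rintro a b ⟨u, v, h, rfl, rfl⟩
    exact dist_div_le_one hL0 (hlat.2 _ _ h)
end

section
/- For infinitely many w (namely all w = 3k+1 with integer k ≥ 2), the periodic causal graph G_w of width w and latency 1 satisfies: there exists a hedge for ({X_{0,0}}, {X_{w−1,w−2}}) in G_w (so P(X_{w−1,w−2} | do X_{0,0}) is unidentifiable), while for every vertex Z = X_{j,t} distinct from X_{0,0} with t ≤ w/3 − 1 there is no hedge for ({X_{0,0}}, {Z}) in G_w (so P(Z | do X_{0,0}) is identifiable for all Z with dist({X_{0,0}}, {Z}) ≤ w/3 − 1). -/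
open Relation

section LowerBoundAux

private lemma rtg_symm {α : Type*} {R : α → α → Prop} (h : ∀ a b, R a b → R b a) {u v : α}
    (p : Relation.ReflTransGen R u v) : Relation.ReflTransGen R v u := by
  induction p with
  | refl => exact .refl
  | tail _ hbc ih => exact Relation.ReflTransGen.head (h _ _ hbc) ih

private lemma rtg_eq {α : Type*} {R : α → α → Prop} (h : ∀ a b, ¬ R a b) {u v : α}
    (p : Relation.ReflTransGen R u v) : u = v := by
  induction p with
  | refl => rfl
  | tail _ hbc _ => exact absurd hbc (h _ _)

private lemma mod_wrap (k c : ℕ) (hc : c < 3*k+1) : (3*k+1 + c) % (3*k+1) = c := by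
  rw [Nat.add_mod_left]; exact Nat.mod_eq_of_lt hc

/-! ### Part 2 auxiliary lemmas -/

private lemma anc_char {w j t : ℕ} (hj : j < w) {v : Vtx}
    (h : Relation.ReflTransGen (GwDir w) v ((j, t) : Vtx)) :
    ∃ c, v.2 + c ≤ t ∧ (v.1 + 3 * c) % w = j := by
  induction h using Relation.ReflTransGen.head_induction_on with
  | refl => exact ⟨0, by omega, by simp [Nat.mod_eq_of_lt hj]⟩
  | head hab _ ih =>
    rename_i a b _
    obtain ⟨m, hm, hr⟩ := ih
    obtain ⟨-, hsnd, hrow⟩ := hab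
    rcases hrow with h1 | h1
    · exact ⟨m, by omega, by rw [← h1]; exact hr⟩
    · refine ⟨m + 1, by omega, ?_⟩
      rw [show a.1 + 3 * (m+1) = (a.1 + 3) + 3 * m by omega, ← Nat.mod_add_mod, ← h1]
      exact hr

private lemma no_bi_core {k j t c c' δ : ℕ} (ht : t < k) (hδ : δ = 1 ∨ δ = 2) {u v : Vtx}
    (hsnd : v.2 = u.2 + 1) (hv1 : v.1 = (u.1 + δ) % (3*k+1))
    (hc : u.2 + c ≤ t) (hcr : (u.1 + 3*c) % (3*k+1) = j)
    (hc' : v.2 + c' ≤ t) (hcr' : (v.1 + 3*c') % (3*k+1) = j) : False := by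
  have key : Nat.ModEq (3*k+1) (u.1 + (δ + 3*c')) (u.1 + 3*c) := by
    show (u.1 + (δ + 3*c')) % (3*k+1) = (u.1 + 3*c) % (3*k+1)
    rw [← Nat.add_assoc, ← Nat.mod_add_mod, ← hv1, hcr', hcr]
  have h2 : (δ + 3*c') % (3*k+1) = (3*c) % (3*k+1) := Nat.ModEq.add_left_cancel' u.1 key
  rw [Nat.mod_eq_of_lt (by omega), Nat.mod_eq_of_lt (by omega)] at h2
  rcases hδ with rfl | rfl <;> omega

private lemma no_bi_half {k j t : ℕ} (ht : t < k) {u v : Vtx}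
    (hb : GwBiHalf (3*k+1) u v)
    (hu : ∃ c, u.2 + c ≤ t ∧ (u.1 + 3*c) % (3*k+1) = j)
    (hv : ∃ c, v.2 + c ≤ t ∧ (v.1 + 3*c) % (3*k+1) = j) : False := by
  obtain ⟨c, hc, hcr⟩ := hu
  obtain ⟨c', hc', hcr'⟩ := hv
  obtain ⟨-, hsnd, hrow⟩ := hb
  rcases hrow with h | h
  · exact no_bi_core ht (Or.inl rfl) hsnd h hc hcr hc' hcr'
  · exact no_bi_core ht (Or.inr rfl) hsnd h hc hcr hc' hcr'

private lemma reach_root {w : ℕ} {F : MixedGraph} (hsub : F.IsSubgraphOf (GwAmbient w))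
    (hfin : F.verts.Finite) {v : Vtx} (hv : v ∈ F.verts) :
    ∃ r ∈ F.roots, Relation.ReflTransGen F.dir v r := by
  obtain ⟨B, hB⟩ := (hfin.image Prod.snd).bddAbove
  have hB' : ∀ x ∈ F.verts, x.2 ≤ B := fun x hx => hB ⟨x, hx, rfl⟩
  suffices h : ∀ d, ∀ x ∈ F.verts, B + 1 - x.2 ≤ d →
      ∃ r ∈ F.roots, Relation.ReflTransGen F.dir x r from h (B+1) v hv (by omega)
  intro d
  induction d with
  | zero => intro x hx hd; have := hB' x hx; omega
  | succ d ih =>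
    intro x hx hd
    by_cases hc : ∃ u, F.dir x u
    · obtain ⟨u, hu⟩ := hc
      obtain ⟨hdir, -, humem⟩ := hsub.2.1 x u hu
      have hsnd : u.2 = x.2 + 1 := hdir.2.1
      obtain ⟨r, hr, hp⟩ := ih u humem (by have := hB' u humem; omega)
      exact ⟨r, hr, Relation.ReflTransGen.head hu hp⟩
    · exact ⟨x, ⟨hx, fun u hu => hc ⟨u, hu⟩⟩, .refl⟩

/-! ### Part 1: the explicit hedge -/

private def Fv (k : ℕ) : Set Vtx :=
  {(3*k-1,0),(3*k,0),(0,0),(3*k,1),(0,1),(1,1)}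

private def Fd (k : ℕ) : Vtx → Vtx → Prop := fun u v =>
  (u = (0,0) ∧ v = (0,1)) ∨ (u = (3*k,0) ∧ v = (3*k,1)) ∨ (u = (3*k-1,0) ∧ v = (1,1))

private def Fb (k : ℕ) : Vtx → Vtx → Prop := fun u v =>
  (u = (3*k-1,0) ∧ v = (3*k,1)) ∨ (u = (3*k-1,0) ∧ v = (0,1)) ∨
  (u = (3*k,0) ∧ v = (0,1)) ∨ (u = (3*k,0) ∧ v = (1,1)) ∨ (u = (0,0) ∧ v = (1,1))

private def FF (k : ℕ) : MixedGraph := ⟨Fv k, Fd k, Fb k⟩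

private def Fv' (k : ℕ) : Set Vtx := {(3*k-1,0),(3*k,0),(3*k,1),(0,1),(1,1)}

private def Fd' (k : ℕ) : Vtx → Vtx → Prop := fun u v =>
  (u = (3*k,0) ∧ v = (3*k,1)) ∨ (u = (3*k-1,0) ∧ v = (1,1))

private def Fb' (k : ℕ) : Vtx → Vtx → Prop := fun u v =>
  (u = (3*k-1,0) ∧ v = (3*k,1)) ∨ (u = (3*k-1,0) ∧ v = (0,1)) ∨
  (u = (3*k,0) ∧ v = (0,1)) ∨ (u = (3*k,0) ∧ v = (1,1))

private def FF' (k : ℕ) : MixedGraph := ⟨Fv' k, Fd' k, Fb' k⟩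

private lemma vert_path {w i : ℕ} (hi : i < w) (a b : ℕ) (hb : a ≤ b) :
    Relation.ReflTransGen (withoutInto (GwDir w) {((0:ℕ),(0:ℕ))}) (i, a) (i, b) := by
  induction b, hb using Nat.le_induction with
  | base => exact .refl
  | succ n hn ih =>
    refine ih.tail ⟨⟨hi, rfl, Or.inl rfl⟩, ?_⟩
    simp

private lemma diag_path {w : ℕ} (hw : 0 < w) {i : ℕ} (hi : i < w) (a : ℕ) (m : ℕ) :
    Relation.ReflTransGen (withoutInto (GwDir w) {((0:ℕ),(0:ℕ))})
      (i, a) (((i + 3*m) % w, a + m) : Vtx) := by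
  induction m with
  | zero =>
    have e : (((i + 3*0) % w, a + 0) : Vtx) = ((i : ℕ), a) := by
      simp [Nat.mod_eq_of_lt hi]
    rw [e]
  | succ n ih =>
    refine ih.tail ⟨⟨Nat.mod_lt _ hw, rfl, Or.inr ?_⟩, ?_⟩
    · rw [Nat.mod_add_mod, show i + 3*n + 3 = i + 3*(n+1) by omega]
    · simp

end LowerBoundAux

set_option maxHeartbeats 2000000 in
/-- Theorem `thm:lowerbound`. For every `k ≥ 2` and `w = 3k+1`, in the
graph `G_w` there is a hedge for `{X_{0,0}}, {X_{w-1,w-2}}`, while for every vertex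
`X_{j,t} ≠ X_{0,0}` with `t ≤ w/3 - 1` there is no hedge for `{X_{0,0}}, {X_{j,t}}`. -/
theorem lower_bound_graph (k : ℕ) (hk : 2 ≤ k) :
    HedgeExists (GwAmbient (3 * k + 1))
        {((0 : ℕ), (0 : ℕ))} {((3 * k + 1 - 1 : ℕ), (3 * k + 1 - 2 : ℕ))} ∧
      ∀ j t : ℕ, j < 3 * k + 1 → ((j, t) : Vtx) ≠ ((0 : ℕ), (0 : ℕ)) →
        t ≤ (3 * k + 1) / 3 - 1 →
        ¬ HedgeExists (GwAmbient (3 * k + 1)) {((0 : ℕ), (0 : ℕ))} {((j, t) : Vtx)} := by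
  constructor
  · -- Part 1: the hedge exists
    rw [show (((3 * k + 1 - 1 : ℕ), (3 * k + 1 - 2 : ℕ)) : Vtx)
          = ((3*k : ℕ), (3*k - 1 : ℕ)) by rw [Prod.mk.injEq]; omega]
    refine ⟨FF k, FF' k, ?_, ?_, ?_, ?_, ?_, ?_, ?_, ?_⟩
    · -- FF ⊆ GwAmbient
      refine ⟨?_, ?_, ?_⟩
      · intro v hv
        simp only [FF, Fv, Set.mem_insert_iff, Set.mem_singleton_iff] at hv
        show v.1 < 3*k+1
        rcases hv with rfl|rfl|rfl|rfl|rfl|rfl <;> omega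
      · rintro u v (⟨rfl,rfl⟩|⟨rfl,rfl⟩|⟨rfl,rfl⟩)
        · exact ⟨⟨by omega, rfl, Or.inl rfl⟩, by simp [FF, Fv], by simp [FF, Fv]⟩
        · exact ⟨⟨by omega, rfl, Or.inl rfl⟩, by simp [FF, Fv], by simp [FF, Fv]⟩
        · refine ⟨⟨by omega, rfl, Or.inr ?_⟩, by simp [FF, Fv], by simp [FF, Fv]⟩
          rw [show 3*k-1+3 = 3*k+1+1 by omega, mod_wrap k 1 (by omega)]
      · rintro u v (⟨rfl,rfl⟩|⟨rfl,rfl⟩|⟨rfl,rfl⟩|⟨rfl,rfl⟩|⟨rfl,rfl⟩)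
        · refine ⟨Or.inl ⟨by omega, rfl, Or.inl ?_⟩, by simp [FF, Fv], by simp [FF, Fv]⟩
          rw [show 3*k-1+1 = 3*k by omega, Nat.mod_eq_of_lt (by omega)]
        · refine ⟨Or.inl ⟨by omega, rfl, Or.inr ?_⟩, by simp [FF, Fv], by simp [FF, Fv]⟩
          rw [show 3*k-1+2 = 3*k+1 by omega, Nat.mod_self]
        · refine ⟨Or.inl ⟨by omega, rfl, Or.inl ?_⟩, by simp [FF, Fv], by simp [FF, Fv]⟩
          rw [Nat.mod_self]
        · refine ⟨Or.inl ⟨by omega, rfl, Or.inr ?_⟩, by simp [FF, Fv], by simp [FF, Fv]⟩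
          rw [show 3*k+2 = 3*k+1+1 by omega, mod_wrap k 1 (by omega)]
        · refine ⟨Or.inl ⟨by omega, rfl, Or.inl ?_⟩, by simp [FF, Fv], by simp [FF, Fv]⟩
          rw [Nat.mod_eq_of_lt (by omega)]
    · -- FF' ⊆ FF
      refine ⟨?_, ?_, ?_⟩
      · intro v hv
        simp only [FF', Fv', Set.mem_insert_iff, Set.mem_singleton_iff] at hv
        simp only [FF, Fv, Set.mem_insert_iff, Set.mem_singleton_iff]
        tauto
      · rintro u v (⟨rfl,rfl⟩|⟨rfl,rfl⟩)
        · exact ⟨Or.inr (Or.inl ⟨rfl, rfl⟩), by simp [FF', Fv'], by simp [FF', Fv']⟩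
        · exact ⟨Or.inr (Or.inr ⟨rfl, rfl⟩), by simp [FF', Fv'], by simp [FF', Fv']⟩
      · rintro u v (⟨rfl,rfl⟩|⟨rfl,rfl⟩|⟨rfl,rfl⟩|⟨rfl,rfl⟩)
        · exact ⟨Or.inl ⟨rfl, rfl⟩, by simp [FF', Fv'], by simp [FF', Fv']⟩
        · exact ⟨Or.inr (Or.inl ⟨rfl, rfl⟩), by simp [FF', Fv'], by simp [FF', Fv']⟩
        · exact ⟨Or.inr (Or.inr (Or.inl ⟨rfl, rfl⟩)), by simp [FF', Fv'], by simp [FF', Fv']⟩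
        · exact ⟨Or.inr (Or.inr (Or.inr (Or.inl ⟨rfl, rfl⟩))), by simp [FF', Fv'],
            by simp [FF', Fv']⟩
    · -- finite
      show (Fv k).Finite
      unfold Fv
      exact (((((Set.finite_singleton _).insert _).insert _).insert _).insert _).insert _
    · -- X ⊆ F.verts \ F'.verts
      intro v hv
      rw [Set.mem_singleton_iff] at hv
      subst hv
      constructor
      · simp [FF, Fv]
      · show ((0,0) : Vtx) ∉ Fv' k
        simp only [Fv', Set.mem_insert_iff, Set.mem_singleton_iff, Prod.mk.injEq]
        omega
    · -- FF is a C-forest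
      constructor
      · -- C-component
        have hub : ∀ u ∈ (FF k).verts,
            Relation.ReflTransGen (fun a b => (FF k).bi a b ∨ (FF k).bi b a) u ((0,1) : Vtx) := by
          intro u hu
          simp only [FF, Fv, Set.mem_insert_iff, Set.mem_singleton_iff] at hu
          have e1 : (FF k).bi (3*k-1,0) (3*k,1) := Or.inl ⟨rfl, rfl⟩
          have e2 : (FF k).bi (3*k-1,0) (0,1) := Or.inr (Or.inl ⟨rfl, rfl⟩)
          have e3 : (FF k).bi (3*k,0) (0,1) := Or.inr (Or.inr (Or.inl ⟨rfl, rfl⟩))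
          have e4 : (FF k).bi (3*k,0) (1,1) := Or.inr (Or.inr (Or.inr (Or.inl ⟨rfl, rfl⟩)))
          have e5 : (FF k).bi (0,0) (1,1) := Or.inr (Or.inr (Or.inr (Or.inr ⟨rfl, rfl⟩)))
          rcases hu with rfl|rfl|rfl|rfl|rfl|rfl
          · exact Relation.ReflTransGen.single (Or.inl e2)
          · exact Relation.ReflTransGen.single (Or.inl e3)
          · exact Relation.ReflTransGen.head (Or.inl e5)
              (Relation.ReflTransGen.head (Or.inr e4) (Relation.ReflTransGen.single (Or.inl e3)))
          · exact Relation.ReflTransGen.head (Or.inr e1) (Relation.ReflTransGen.single (Or.inl e2))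
          · exact .refl
          · exact Relation.ReflTransGen.head (Or.inr e4) (Relation.ReflTransGen.single (Or.inl e3))
        intro u hu v hv
        exact (hub u hu).trans (rtg_symm (fun a b h => h.symm) (hub v hv))
      · -- forest
        rintro u v₁ v₂ (⟨rfl,rfl⟩|⟨rfl,rfl⟩|⟨rfl,rfl⟩) (⟨h,rfl⟩|⟨h,rfl⟩|⟨h,rfl⟩) <;>
          first
            | rfl
            | (exfalso; simp only [Prod.mk.injEq] at h; omega)
    · -- FF' is a C-forest
      constructor
      · have hub : ∀ u ∈ (FF' k).verts,
            Relation.ReflTransGen (fun a b => (FF' k).bi a b ∨ (FF' k).bi b a) u ((0,1) : Vtx) := by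
          intro u hu
          simp only [FF', Fv', Set.mem_insert_iff, Set.mem_singleton_iff] at hu
          have e1 : (FF' k).bi (3*k-1,0) (3*k,1) := Or.inl ⟨rfl, rfl⟩
          have e2 : (FF' k).bi (3*k-1,0) (0,1) := Or.inr (Or.inl ⟨rfl, rfl⟩)
          have e3 : (FF' k).bi (3*k,0) (0,1) := Or.inr (Or.inr (Or.inl ⟨rfl, rfl⟩))
          have e4 : (FF' k).bi (3*k,0) (1,1) := Or.inr (Or.inr (Or.inr ⟨rfl, rfl⟩))
          rcases hu with rfl|rfl|rfl|rfl|rfl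
          · exact Relation.ReflTransGen.single (Or.inl e2)
          · exact Relation.ReflTransGen.single (Or.inl e3)
          · exact Relation.ReflTransGen.head (Or.inr e1) (Relation.ReflTransGen.single (Or.inl e2))
          · exact .refl
          · exact Relation.ReflTransGen.head (Or.inr e4) (Relation.ReflTransGen.single (Or.inl e3))
        intro u hu v hv
        exact (hub u hu).trans (rtg_symm (fun a b h => h.symm) (hub v hv))
      · rintro u v₁ v₂ (⟨rfl,rfl⟩|⟨rfl,rfl⟩) (⟨h,rfl⟩|⟨h,rfl⟩) <;>
          first
            | rfl
            | (exfalso; simp only [Prod.mk.injEq] at h; omega)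
    · -- same roots
      have hF : (FF k).roots = {((3*k,1) : Vtx), (0,1), (1,1)} := by
        ext v
        constructor
        · rintro ⟨hv, hnc⟩
          simp only [FF, Fv, Set.mem_insert_iff, Set.mem_singleton_iff] at hv
          simp only [Set.mem_insert_iff, Set.mem_singleton_iff]
          rcases hv with rfl|rfl|rfl|rfl|rfl|rfl
          · exact absurd (hnc (1,1)) (by simp [FF, Fd])
          · exact absurd (hnc (3*k,1)) (by simp [FF, Fd])
          · exact absurd (hnc (0,1)) (by simp [FF, Fd])
          · exact Or.inl rfl
          · exact Or.inr (Or.inl rfl)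
          · exact Or.inr (Or.inr rfl)
        · intro hv
          simp only [Set.mem_insert_iff, Set.mem_singleton_iff] at hv
          have hmem : v ∈ (FF k).verts := by
            simp only [FF, Fv, Set.mem_insert_iff, Set.mem_singleton_iff]
            tauto
          refine ⟨hmem, fun u hu => ?_⟩
          rcases hu with ⟨h,-⟩|⟨h,-⟩|⟨h,-⟩ <;> rcases hv with rfl|rfl|rfl <;>
            (simp only [Prod.mk.injEq] at h; omega)
      have hF' : (FF' k).roots = {((3*k,1) : Vtx), (0,1), (1,1)} := by
        ext v
        constructor
        · rintro ⟨hv, hnc⟩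
          simp only [FF', Fv', Set.mem_insert_iff, Set.mem_singleton_iff] at hv
          simp only [Set.mem_insert_iff, Set.mem_singleton_iff]
          rcases hv with rfl|rfl|rfl|rfl|rfl
          · exact absurd (hnc (1,1)) (by simp [FF', Fd'])
          · exact absurd (hnc (3*k,1)) (by simp [FF', Fd'])
          · exact Or.inl rfl
          · exact Or.inr (Or.inl rfl)
          · exact Or.inr (Or.inr rfl)
        · intro hv
          simp only [Set.mem_insert_iff, Set.mem_singleton_iff] at hv
          have hmem : v ∈ (FF' k).verts := by
            simp only [FF', Fv', Set.mem_insert_iff, Set.mem_singleton_iff]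
            tauto
          refine ⟨hmem, fun u hu => ?_⟩
          rcases hu with ⟨h,-⟩|⟨h,-⟩ <;> rcases hv with rfl|rfl|rfl <;>
            (simp only [Prod.mk.injEq] at h; omega)
      rw [hF, hF']
    · -- roots ⊆ ancestors
      have hF : (FF k).roots ⊆ {((3*k,1) : Vtx), (0,1), (1,1)} := by
        rintro v ⟨hv, hnc⟩
        simp only [FF, Fv, Set.mem_insert_iff, Set.mem_singleton_iff] at hv
        simp only [Set.mem_insert_iff, Set.mem_singleton_iff]
        rcases hv with rfl|rfl|rfl|rfl|rfl|rfl
        · exact absurd (hnc (1,1)) (by simp [FF, Fd])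
        · exact absurd (hnc (3*k,1)) (by simp [FF, Fd])
        · exact absurd (hnc (0,1)) (by simp [FF, Fd])
        · exact Or.inl rfl
        · exact Or.inr (Or.inl rfl)
        · exact Or.inr (Or.inr rfl)
      intro v hv
      have hv' := hF hv
      simp only [Set.mem_insert_iff, Set.mem_singleton_iff] at hv'
      have hw : (0:ℕ) < 3*k+1 := by omega
      have h3k : 3*k < 3*k+1 := by omega
      refine ⟨((3*k : ℕ), (3*k-1 : ℕ)), rfl, ?_⟩
      show Relation.ReflTransGen (withoutInto (GwDir (3*k+1)) {((0:ℕ),(0:ℕ))}) v (3*k, 3*k-1)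
      rcases hv' with rfl|rfl|rfl
      · exact vert_path h3k 1 (3*k-1) (by omega)
      · have d := diag_path hw (show (0:ℕ) < 3*k+1 by omega) 1 k
        rw [show (0 + 3*k) % (3*k+1) = 3*k by
          rw [Nat.zero_add]; exact Nat.mod_eq_of_lt h3k] at d
        exact d.trans (vert_path h3k (1+k) (3*k-1) (by omega))
      · have d := diag_path hw (show (1:ℕ) < 3*k+1 by omega) 1 (2*k)
        rw [show (1 + 3*(2*k)) % (3*k+1) = 3*k by
          rw [show 1 + 3*(2*k) = 3*k+1 + 3*k by omega]; exact mod_wrap k (3*k) h3k] at d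
        exact d.trans (vert_path h3k (1+2*k) (3*k-1) (by omega))
  · -- Part 2: no hedge nearby
    intro j t hjw hne ht
    have ht' : t < k := by omega
    rintro ⟨F, F', hsub, hsub', hfin, hX, ⟨hCC, -⟩, -, hroots, hrootsAn⟩
    have hx0 := hX (Set.mem_singleton _)
    have hx0F : ((0:ℕ),(0:ℕ)) ∈ F.verts := hx0.1
    have hx0F' : ((0:ℕ),(0:ℕ)) ∉ F'.verts := hx0.2
    have hAn : ∀ v ∈ F.verts, ∃ c, v.2 + c ≤ t ∧ (v.1 + 3*c) % (3*k+1) = j := by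
      intro v hv
      obtain ⟨r, hr, hp⟩ := reach_root hsub hfin hv
      have hp' : Relation.ReflTransGen (GwDir (3*k+1)) v r :=
        Relation.ReflTransGen.mono (r := F.dir) (p := GwDir (3*k+1)) (fun a b h => (hsub.2.1 a b h).1) v r hp
      obtain ⟨y, hy, hq⟩ := hrootsAn hr
      rw [Set.mem_singleton_iff] at hy
      subst hy
      have hq' : Relation.ReflTransGen (GwDir (3*k+1)) r ((j, t) : Vtx) :=
        Relation.ReflTransGen.mono (r := withoutInto (GwAmbient (3*k+1)).dir {((0:ℕ),(0:ℕ))})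
          (p := GwDir (3*k+1)) (fun a b h => h.1) r (j, t) hq
      exact anc_char hjw (hp'.trans hq')
    have hnobi : ∀ u v, ¬ F.bi u v := by
      intro u v hbi
      obtain ⟨hb, hu, hv⟩ := hsub.2.2 u v hbi
      rcases hb with hb | hb
      · exact no_bi_half ht' hb (hAn u hu) (hAn v hv)
      · exact no_bi_half ht' hb (hAn v hv) (hAn u hu)
    have hsingle : ∀ v ∈ F.verts, v = ((0:ℕ),(0:ℕ)) := fun v hv =>
      rtg_eq (fun a b h => h.elim (hnobi a b) (hnobi b a)) (hCC v hv _ hx0F)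
    have hroot0 : ((0:ℕ),(0:ℕ)) ∈ F.roots := by
      refine ⟨hx0F, fun u hu => ?_⟩
      obtain ⟨hd, -, humem⟩ := hsub.2.1 _ u hu
      rw [hsingle u humem] at hd
      exact absurd hd.2.1 (by simp)
    rw [hroots] at hroot0
    exact hx0F' hroot0.1
end

section
/- Let k ≥ 2 and w = 3k+1. Then there exists a hedge (F, F') for ({X_{0,0}}, {X_{w−1,w−2}}) in G_w with vertex sets V(F) = {X_{0,0}, X_{0,1}, X_{1,1}, X_{w−3,0}, X_{w−2,0}, X_{w−1,0}, X_{w−1,1}} and V(F') = {X_{0,1}, X_{1,1}, X_{w−3,0}, X_{w−2,0}, X_{w−1,0}, X_{w−1,1}}, whose common root set is R = {X_{0,1}, X_{1,1}, X_{w−1,1}}. -/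
open Relation

section Hedge15Aux

/-- Directed edges of the explicit hedge's big C-forest `F`. -/
def Fdir15 (k : ℕ) (u v : Vtx) : Prop :=
  (u = ((3*k-2 : ℕ), (0:ℕ)) ∧ v = ((0:ℕ), (1:ℕ))) ∨
  (u = ((3*k-1 : ℕ), (0:ℕ)) ∧ v = ((1:ℕ), (1:ℕ))) ∨
  (u = ((3*k : ℕ), (0:ℕ)) ∧ v = ((3*k : ℕ), (1:ℕ))) ∨
  (u = ((0:ℕ), (0:ℕ)) ∧ v = ((0:ℕ), (1:ℕ)))

def F'dir15 (k : ℕ) (u v : Vtx) : Prop :=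
  (u = ((3*k-2 : ℕ), (0:ℕ)) ∧ v = ((0:ℕ), (1:ℕ))) ∨
  (u = ((3*k-1 : ℕ), (0:ℕ)) ∧ v = ((1:ℕ), (1:ℕ))) ∨
  (u = ((3*k : ℕ), (0:ℕ)) ∧ v = ((3*k : ℕ), (1:ℕ)))

def Fbi15 (k : ℕ) (u v : Vtx) : Prop :=
  (u = ((3*k-2 : ℕ), (0:ℕ)) ∧ v = ((3*k : ℕ), (1:ℕ))) ∨
  (u = ((3*k-1 : ℕ), (0:ℕ)) ∧ v = ((3*k : ℕ), (1:ℕ))) ∨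
  (u = ((3*k-1 : ℕ), (0:ℕ)) ∧ v = ((0:ℕ), (1:ℕ))) ∨
  (u = ((3*k : ℕ), (0:ℕ)) ∧ v = ((0:ℕ), (1:ℕ))) ∨
  (u = ((3*k : ℕ), (0:ℕ)) ∧ v = ((1:ℕ), (1:ℕ))) ∨
  (u = ((0:ℕ), (0:ℕ)) ∧ v = ((1:ℕ), (1:ℕ)))

def F'bi15 (k : ℕ) (u v : Vtx) : Prop :=
  (u = ((3*k-2 : ℕ), (0:ℕ)) ∧ v = ((3*k : ℕ), (1:ℕ))) ∨
  (u = ((3*k-1 : ℕ), (0:ℕ)) ∧ v = ((3*k : ℕ), (1:ℕ))) ∨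
  (u = ((3*k-1 : ℕ), (0:ℕ)) ∧ v = ((0:ℕ), (1:ℕ))) ∨
  (u = ((3*k : ℕ), (0:ℕ)) ∧ v = ((0:ℕ), (1:ℕ))) ∨
  (u = ((3*k : ℕ), (0:ℕ)) ∧ v = ((1:ℕ), (1:ℕ)))

def Fgraph15 (k : ℕ) : MixedGraph :=
  ⟨({((0 : ℕ), (0 : ℕ)), ((0 : ℕ), (1 : ℕ)), ((1 : ℕ), (1 : ℕ)),
      ((3 * k - 2 : ℕ), (0 : ℕ)), ((3 * k - 1 : ℕ), (0 : ℕ)),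
      ((3 * k : ℕ), (0 : ℕ)), ((3 * k : ℕ), (1 : ℕ))} : Set Vtx),
   Fdir15 k, Fbi15 k⟩

def F'graph15 (k : ℕ) : MixedGraph :=
  ⟨({((0 : ℕ), (1 : ℕ)), ((1 : ℕ), (1 : ℕ)),
      ((3 * k - 2 : ℕ), (0 : ℕ)), ((3 * k - 1 : ℕ), (0 : ℕ)),
      ((3 * k : ℕ), (0 : ℕ)), ((3 * k : ℕ), (1 : ℕ))} : Set Vtx),
   F'dir15 k, F'bi15 k⟩

/-- Staying in a fixed row is a directed path avoiding `(0,0)`. -/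
lemma rowPath15 (k i t n : ℕ) (hi : i < 3*k+1) :
    Relation.ReflTransGen (withoutInto (GwDir (3*k+1)) {((0:ℕ),(0:ℕ))})
      (i, t) (i, t+n) := by
  induction n with
  | zero => exact Relation.ReflTransGen.refl
  | succ n ih =>
    refine ih.tail ⟨⟨hi, rfl, Or.inl rfl⟩, ?_⟩
    simp [Prod.ext_iff]

/-- Climbing rows `0, 3, 6, …, 3j` is a directed path avoiding `(0,0)`. -/
lemma climb015 (k t : ℕ) : ∀ j, j ≤ k →
    Relation.ReflTransGen (withoutInto (GwDir (3*k+1)) {((0:ℕ),(0:ℕ))})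
      ((0:ℕ), t) (3*j, t+j) := by
  intro j hj
  induction j with
  | zero => simpa using Relation.ReflTransGen.refl
  | succ j ih =>
    refine (ih (by omega)).tail ⟨⟨by omega, rfl, Or.inr ?_⟩, ?_⟩
    · show 3*(j+1) = (3*j + 3) % (3*k+1)
      rw [Nat.mod_eq_of_lt (by omega)]; omega
    · simp [Prod.ext_iff]

/-- Climbing rows `1, 4, …, 3j+1` is a directed path avoiding `(0,0)`. -/
lemma climb115 (k t : ℕ) : ∀ j, j + 1 ≤ k →
    Relation.ReflTransGen (withoutInto (GwDir (3*k+1)) {((0:ℕ),(0:ℕ))})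
      ((1:ℕ), t) (3*j+1, t+j) := by
  intro j hj
  induction j with
  | zero => simpa using Relation.ReflTransGen.refl
  | succ j ih =>
    refine (ih (by omega)).tail ⟨⟨by omega, rfl, Or.inr ?_⟩, ?_⟩
    · show 3*(j+1)+1 = (3*j+1 + 3) % (3*k+1)
      rw [Nat.mod_eq_of_lt (by omega)]; omega
    · simp [Prod.ext_iff]

end Hedge15Aux

lemma Froots15 (k : ℕ) (hk : 2 ≤ k) :
    (Fgraph15 k).roots = ({((0 : ℕ), (1 : ℕ)), ((1 : ℕ), (1 : ℕ)),
      ((3 * k : ℕ), (1 : ℕ))} : Set Vtx) := by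
  ext v
  simp only [MixedGraph.roots, Fgraph15, Set.mem_setOf_eq, Set.mem_insert_iff,
    Set.mem_singleton_iff]
  constructor
  · rintro ⟨hv, hch⟩
    rcases hv with rfl | rfl | rfl | rfl | rfl | rfl | rfl
    · exact absurd (Or.inr (Or.inr (Or.inr ⟨rfl, rfl⟩))) (hch ((0:ℕ),(1:ℕ)))
    · exact Or.inl rfl
    · exact Or.inr (Or.inl rfl)
    · exact absurd (Or.inl ⟨rfl, rfl⟩) (hch ((0:ℕ),(1:ℕ)))
    · exact absurd (Or.inr (Or.inl ⟨rfl, rfl⟩)) (hch ((1:ℕ),(1:ℕ)))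
    · exact absurd (Or.inr (Or.inr (Or.inl ⟨rfl, rfl⟩))) (hch ((3*k:ℕ),(1:ℕ)))
    · exact Or.inr (Or.inr rfl)
  · rintro (rfl | rfl | rfl)
    · exact ⟨Or.inr (Or.inl rfl), fun u hu => by
        simp [Fdir15, Prod.ext_iff] at hu⟩
    · exact ⟨Or.inr (Or.inr (Or.inl rfl)), fun u hu => by
        simp [Fdir15, Prod.ext_iff] at hu⟩
    · exact ⟨Or.inr (Or.inr (Or.inr (Or.inr (Or.inr (Or.inr rfl))))), fun u hu => by
        simp [Fdir15, Prod.ext_iff] at hu⟩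

lemma F'roots15 (k : ℕ) (hk : 2 ≤ k) :
    (F'graph15 k).roots = ({((0 : ℕ), (1 : ℕ)), ((1 : ℕ), (1 : ℕ)),
      ((3 * k : ℕ), (1 : ℕ))} : Set Vtx) := by
  ext v
  simp only [MixedGraph.roots, F'graph15, Set.mem_setOf_eq, Set.mem_insert_iff,
    Set.mem_singleton_iff]
  constructor
  · rintro ⟨hv, hch⟩
    rcases hv with rfl | rfl | rfl | rfl | rfl | rfl
    · exact Or.inl rfl
    · exact Or.inr (Or.inl rfl)
    · exact absurd (Or.inl ⟨rfl, rfl⟩) (hch ((0:ℕ),(1:ℕ)))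
    · exact absurd (Or.inr (Or.inl ⟨rfl, rfl⟩)) (hch ((1:ℕ),(1:ℕ)))
    · exact absurd (Or.inr (Or.inr ⟨rfl, rfl⟩)) (hch ((3*k:ℕ),(1:ℕ)))
    · exact Or.inr (Or.inr rfl)
  · rintro (rfl | rfl | rfl)
    · exact ⟨Or.inl rfl, fun u hu => by
        simp [F'dir15, Prod.ext_iff] at hu⟩
    · exact ⟨Or.inr (Or.inl rfl), fun u hu => by
        simp [F'dir15, Prod.ext_iff] at hu⟩
    · exact ⟨Or.inr (Or.inr (Or.inr (Or.inr (Or.inr rfl)))), fun u hu => by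
        simp [F'dir15, Prod.ext_iff] at hu⟩

/-- The explicit hedge in `G_w` for `{X_{0,0}}, {X_{w-1,w-2}}` with the
vertex sets and common root set given in the paper. -/
theorem explicit_hedge (k : ℕ) (hk : 2 ≤ k) :
    ∃ F F' : MixedGraph,
      IsHedge (GwAmbient (3 * k + 1))
        {((0 : ℕ), (0 : ℕ))} {((3 * k + 1 - 1 : ℕ), (3 * k + 1 - 2 : ℕ))} F F' ∧
      F.verts = ({((0 : ℕ), (0 : ℕ)), ((0 : ℕ), (1 : ℕ)), ((1 : ℕ), (1 : ℕ)),
        ((3 * k - 2 : ℕ), (0 : ℕ)), ((3 * k - 1 : ℕ), (0 : ℕ)),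
        ((3 * k : ℕ), (0 : ℕ)), ((3 * k : ℕ), (1 : ℕ))} : Set Vtx) ∧
      F'.verts = ({((0 : ℕ), (1 : ℕ)), ((1 : ℕ), (1 : ℕ)),
        ((3 * k - 2 : ℕ), (0 : ℕ)), ((3 * k - 1 : ℕ), (0 : ℕ)),
        ((3 * k : ℕ), (0 : ℕ)), ((3 * k : ℕ), (1 : ℕ))} : Set Vtx) ∧
      F.roots = ({((0 : ℕ), (1 : ℕ)), ((1 : ℕ), (1 : ℕ)),
        ((3 * k : ℕ), (1 : ℕ))} : Set Vtx) ∧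
      F'.roots = ({((0 : ℕ), (1 : ℕ)), ((1 : ℕ), (1 : ℕ)),
        ((3 * k : ℕ), (1 : ℕ))} : Set Vtx) := by
  refine ⟨Fgraph15 k, F'graph15 k,
    ⟨?_, ?_, ?_, ?_, ⟨?_, ?_⟩, ⟨?_, ?_⟩, by rw [Froots15 k hk, F'roots15 k hk], ?_⟩,
    rfl, rfl, Froots15 k hk, F'roots15 k hk⟩
  · -- F subgraph of ambient
    refine ⟨?_, ?_, ?_⟩
    · rintro v (rfl | rfl | rfl | rfl | rfl | rfl | rfl) <;>
        simp [GwAmbient] <;> omega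
    · rintro u v (⟨rfl, rfl⟩ | ⟨rfl, rfl⟩ | ⟨rfl, rfl⟩ | ⟨rfl, rfl⟩)
      · refine ⟨⟨by omega, rfl, Or.inr ?_⟩, ?_, ?_⟩
        · rw [show 3*k-2+3 = 3*k+1 by omega, Nat.mod_self]
        · exact Or.inr (Or.inr (Or.inr (Or.inl rfl)))
        · exact Or.inr (Or.inl rfl)
      · refine ⟨⟨by omega, rfl, Or.inr ?_⟩, ?_, ?_⟩
        · rw [show 3*k-1+3 = (3*k+1)+1 by omega, Nat.add_mod_left,
            Nat.mod_eq_of_lt (by omega)]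
        · exact Or.inr (Or.inr (Or.inr (Or.inr (Or.inl rfl))))
        · exact Or.inr (Or.inr (Or.inl rfl))
      · refine ⟨⟨by omega, rfl, Or.inl rfl⟩, ?_, ?_⟩
        · exact Or.inr (Or.inr (Or.inr (Or.inr (Or.inr (Or.inl rfl)))))
        · exact Or.inr (Or.inr (Or.inr (Or.inr (Or.inr (Or.inr rfl)))))
      · refine ⟨⟨by omega, rfl, Or.inl rfl⟩, Or.inl rfl, Or.inr (Or.inl rfl)⟩
    · rintro u v (⟨rfl, rfl⟩ | ⟨rfl, rfl⟩ | ⟨rfl, rfl⟩ | ⟨rfl, rfl⟩ | ⟨rfl, rfl⟩ | ⟨rfl, rfl⟩)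
      · refine ⟨Or.inl ⟨by omega, rfl, Or.inr ?_⟩, ?_, ?_⟩
        · rw [show 3*k-2+2 = 3*k by omega, Nat.mod_eq_of_lt (by omega)]
        · exact Or.inr (Or.inr (Or.inr (Or.inl rfl)))
        · exact Or.inr (Or.inr (Or.inr (Or.inr (Or.inr (Or.inr rfl)))))
      · refine ⟨Or.inl ⟨by omega, rfl, Or.inl ?_⟩, ?_, ?_⟩
        · rw [show 3*k-1+1 = 3*k by omega, Nat.mod_eq_of_lt (by omega)]
        · exact Or.inr (Or.inr (Or.inr (Or.inr (Or.inl rfl))))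
        · exact Or.inr (Or.inr (Or.inr (Or.inr (Or.inr (Or.inr rfl)))))
      · refine ⟨Or.inl ⟨by omega, rfl, Or.inr ?_⟩, ?_, ?_⟩
        · rw [show 3*k-1+2 = 3*k+1 by omega, Nat.mod_self]
        · exact Or.inr (Or.inr (Or.inr (Or.inr (Or.inl rfl))))
        · exact Or.inr (Or.inl rfl)
      · refine ⟨Or.inl ⟨by omega, rfl, Or.inl ?_⟩, ?_, ?_⟩
        · rw [Nat.mod_self]
        · exact Or.inr (Or.inr (Or.inr (Or.inr (Or.inr (Or.inl rfl)))))
        · exact Or.inr (Or.inl rfl)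
      · refine ⟨Or.inl ⟨by omega, rfl, Or.inr ?_⟩, ?_, ?_⟩
        · rw [show 3*k+2 = (3*k+1)+1 by omega, Nat.add_mod_left,
            Nat.mod_eq_of_lt (by omega)]
        · exact Or.inr (Or.inr (Or.inr (Or.inr (Or.inr (Or.inl rfl)))))
        · exact Or.inr (Or.inr (Or.inl rfl))
      · refine ⟨Or.inl ⟨by omega, rfl, Or.inl (by
            rw [Nat.mod_eq_of_lt (by omega)])⟩, Or.inl rfl,
          Or.inr (Or.inr (Or.inl rfl))⟩
  · -- F' subgraph of F
    refine ⟨?_, ?_, ?_⟩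
    · rintro v (rfl | rfl | rfl | rfl | rfl | rfl)
      · exact Or.inr (Or.inl rfl)
      · exact Or.inr (Or.inr (Or.inl rfl))
      · exact Or.inr (Or.inr (Or.inr (Or.inl rfl)))
      · exact Or.inr (Or.inr (Or.inr (Or.inr (Or.inl rfl))))
      · exact Or.inr (Or.inr (Or.inr (Or.inr (Or.inr (Or.inl rfl)))))
      · exact Or.inr (Or.inr (Or.inr (Or.inr (Or.inr (Or.inr rfl)))))
    · rintro u v (⟨rfl, rfl⟩ | ⟨rfl, rfl⟩ | ⟨rfl, rfl⟩)
      · exact ⟨Or.inl ⟨rfl, rfl⟩, Or.inr (Or.inr (Or.inl rfl)), Or.inl rfl⟩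
      · exact ⟨Or.inr (Or.inl ⟨rfl, rfl⟩), Or.inr (Or.inr (Or.inr (Or.inl rfl))),
          Or.inr (Or.inl rfl)⟩
      · exact ⟨Or.inr (Or.inr (Or.inl ⟨rfl, rfl⟩)),
          Or.inr (Or.inr (Or.inr (Or.inr (Or.inl rfl)))),
          Or.inr (Or.inr (Or.inr (Or.inr (Or.inr rfl))))⟩
    · rintro u v (⟨rfl, rfl⟩ | ⟨rfl, rfl⟩ | ⟨rfl, rfl⟩ | ⟨rfl, rfl⟩ | ⟨rfl, rfl⟩)
      · exact ⟨Or.inl ⟨rfl, rfl⟩, Or.inr (Or.inr (Or.inl rfl)),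
          Or.inr (Or.inr (Or.inr (Or.inr (Or.inr rfl))))⟩
      · exact ⟨Or.inr (Or.inl ⟨rfl, rfl⟩), Or.inr (Or.inr (Or.inr (Or.inl rfl))),
          Or.inr (Or.inr (Or.inr (Or.inr (Or.inr rfl))))⟩
      · exact ⟨Or.inr (Or.inr (Or.inl ⟨rfl, rfl⟩)),
          Or.inr (Or.inr (Or.inr (Or.inl rfl))), Or.inl rfl⟩
      · exact ⟨Or.inr (Or.inr (Or.inr (Or.inl ⟨rfl, rfl⟩))),
          Or.inr (Or.inr (Or.inr (Or.inr (Or.inl rfl)))), Or.inl rfl⟩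
      · exact ⟨Or.inr (Or.inr (Or.inr (Or.inr (Or.inl ⟨rfl, rfl⟩)))),
          Or.inr (Or.inr (Or.inr (Or.inr (Or.inl rfl)))), Or.inr (Or.inl rfl)⟩
  · -- finiteness
    exact Set.Finite.insert _ (Set.Finite.insert _ (Set.Finite.insert _
      (Set.Finite.insert _ (Set.Finite.insert _ (Set.Finite.insert _
      (Set.finite_singleton _))))))
  · -- X ⊆ V(F) \ V(F')
    rintro x rfl
    refine ⟨Or.inl rfl, ?_⟩
    simp only [F'graph15, Set.mem_insert_iff, Set.mem_singleton_iff, Prod.ext_iff]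
    omega
  · -- F is a C-component
    have hsym : Symmetric (fun a b => (Fgraph15 k).bi a b ∨ (Fgraph15 k).bi b a) :=
      fun a b h => h.symm
    have reach : ∀ x ∈ (Fgraph15 k).verts,
        Relation.ReflTransGen (fun a b => (Fgraph15 k).bi a b ∨ (Fgraph15 k).bi b a)
          ((0:ℕ),(0:ℕ)) x := by
      have hac : Relation.ReflTransGen
          (fun a b => (Fgraph15 k).bi a b ∨ (Fgraph15 k).bi b a)
          ((0:ℕ),(0:ℕ)) ((1:ℕ),(1:ℕ)) :=
        Relation.ReflTransGen.single (Or.inl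
          (Or.inr (Or.inr (Or.inr (Or.inr (Or.inr ⟨rfl, rfl⟩))))))
      have hf := hac.tail (Or.inr
        (Or.inr (Or.inr (Or.inr (Or.inr (Or.inl ⟨rfl, rfl⟩))))))
      have hb := hf.tail (Or.inl (Or.inr (Or.inr (Or.inr (Or.inl ⟨rfl, rfl⟩)))))
      have he := hb.tail (Or.inr (Or.inr (Or.inr (Or.inl ⟨rfl, rfl⟩))))
      have hg := he.tail (Or.inl (Or.inr (Or.inl ⟨rfl, rfl⟩)))
      have hd := hg.tail (Or.inr (Or.inl ⟨rfl, rfl⟩))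
      rintro x (rfl | rfl | rfl | rfl | rfl | rfl | rfl)
      · exact Relation.ReflTransGen.refl
      · exact hb
      · exact hac
      · exact hd
      · exact he
      · exact hf
      · exact hg
    intro u hu v hv
    exact ((@Std.Symm.symm _ _ (@Relation.ReflTransGen.symmetric _ _ ⟨fun _ _ h => hsym h⟩)) _ _ (reach u hu)).trans (reach v hv)
  · -- F is a forest
    rintro u v₁ v₂ (⟨rfl, rfl⟩ | ⟨rfl, rfl⟩ | ⟨rfl, rfl⟩ | ⟨rfl, rfl⟩) h2 <;>
      rcases h2 with ⟨he, rfl⟩ | ⟨he, rfl⟩ | ⟨he, rfl⟩ | ⟨he, rfl⟩ <;>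
      first
        | rfl
        | (exfalso; simp only [Prod.mk.injEq] at he; omega)
  · -- F' is a C-component
    have hsym : Symmetric (fun a b => (F'graph15 k).bi a b ∨ (F'graph15 k).bi b a) :=
      fun a b h => h.symm
    have reach : ∀ x ∈ (F'graph15 k).verts,
        Relation.ReflTransGen (fun a b => (F'graph15 k).bi a b ∨ (F'graph15 k).bi b a)
          ((0:ℕ),(1:ℕ)) x := by
      have he : Relation.ReflTransGen
          (fun a b => (F'graph15 k).bi a b ∨ (F'graph15 k).bi b a)
          ((0:ℕ),(1:ℕ)) ((3*k-1:ℕ),(0:ℕ)) :=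
        Relation.ReflTransGen.single (Or.inr (Or.inr (Or.inr (Or.inl ⟨rfl, rfl⟩))))
      have hg := he.tail (Or.inl (Or.inr (Or.inl ⟨rfl, rfl⟩)))
      have hd := hg.tail (Or.inr (Or.inl ⟨rfl, rfl⟩))
      have hf : Relation.ReflTransGen
          (fun a b => (F'graph15 k).bi a b ∨ (F'graph15 k).bi b a)
          ((0:ℕ),(1:ℕ)) ((3*k:ℕ),(0:ℕ)) :=
        Relation.ReflTransGen.single (Or.inr (Or.inr (Or.inr (Or.inr (Or.inl ⟨rfl, rfl⟩)))))
      have hc := hf.tail (Or.inl (Or.inr (Or.inr (Or.inr (Or.inr ⟨rfl, rfl⟩)))))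
      rintro x (rfl | rfl | rfl | rfl | rfl | rfl)
      · exact Relation.ReflTransGen.refl
      · exact hc
      · exact hd
      · exact he
      · exact hf
      · exact hg
    intro u hu v hv
    exact ((@Std.Symm.symm _ _ (@Relation.ReflTransGen.symmetric _ _ ⟨fun _ _ h => hsym h⟩)) _ _ (reach u hu)).trans (reach v hv)
  · -- F' is a forest
    rintro u v₁ v₂ (⟨rfl, rfl⟩ | ⟨rfl, rfl⟩ | ⟨rfl, rfl⟩) h2 <;>
      rcases h2 with ⟨he, rfl⟩ | ⟨he, rfl⟩ | ⟨he, rfl⟩ <;>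
      first
        | rfl
        | (exfalso; simp only [Prod.mk.injEq] at he; omega)
  · -- roots ⊆ ancestors
    rw [Froots15 k hk]
    have hR : (GwAmbient (3*k+1)).dir = GwDir (3*k+1) := rfl
    rintro v (rfl | rfl | rfl)
    · refine ⟨((3*k+1-1 : ℕ), (3*k+1-2 : ℕ)), rfl, ?_⟩
      have h1 := (climb015 k 1 k le_rfl).trans
        (rowPath15 k (3*k) (1+k) (2*k-2) (by omega))
      have he : ((3*k+1-1 : ℕ), (3*k+1-2 : ℕ)) = ((3*k : ℕ), (1+k+(2*k-2) : ℕ)) := by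
        simp only [Prod.mk.injEq]; omega
      rw [hR, he]
      exact h1
    · refine ⟨((3*k+1-1 : ℕ), (3*k+1-2 : ℕ)), rfl, ?_⟩
      have h1 := climb115 k 1 (k-1) (by omega)
      have h2 : withoutInto (GwDir (3*k+1)) {((0:ℕ),(0:ℕ))}
          ((3*(k-1)+1 : ℕ), (1+(k-1) : ℕ)) ((0:ℕ), (1+(k-1)+1 : ℕ)) := by
        refine ⟨⟨by omega, rfl, Or.inr ?_⟩, ?_⟩
        · rw [show 3*(k-1)+1+3 = 3*k+1 by omega, Nat.mod_self]
        · simp [Prod.ext_iff]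
      have h3 := climb015 k (1+(k-1)+1) k le_rfl
      have h4 := rowPath15 k (3*k) (1+(k-1)+1+k) (k-2) (by omega)
      have he : ((3*k+1-1 : ℕ), (3*k+1-2 : ℕ))
          = ((3*k : ℕ), (1+(k-1)+1+k+(k-2) : ℕ)) := by
        simp only [Prod.mk.injEq]; omega
      rw [hR, he]
      exact ((h1.tail h2).trans h3).trans h4
    · refine ⟨((3*k+1-1 : ℕ), (3*k+1-2 : ℕ)), rfl, ?_⟩
      have h1 := rowPath15 k (3*k) 1 (3*k-2) (by omega)
      have he : ((3*k+1-1 : ℕ), (3*k+1-2 : ℕ)) = ((3*k : ℕ), (1+(3*k-2) : ℕ)) := by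
        simp only [Prod.mk.injEq]; omega
      rw [hR, he]
      exact h1
end

section
/- Let k ≥ 1 and w = 3k+1. In the graph G_w, if there is a directed path from X_{0,0} to X_{j,t} with t ≤ (w−1)/3, then j = 3s for some integer s with 0 ≤ s ≤ t; in particular j is divisible by 3. -/
open Relation

/-- In `G_w` with `w = 3k+1`, any vertex `X_{j,t}` with `t ≤ (w-1)/3`
reachable from `X_{0,0}` by a directed path has `j = 3s` for some `0 ≤ s ≤ t`. -/
theorem descendants_rows_divisible (k : ℕ) (hk : 1 ≤ k) (j t : ℕ)
    (ht : t ≤ (3 * k + 1 - 1) / 3)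
    (hpath : Relation.ReflTransGen (GwDir (3 * k + 1)) ((0 : ℕ), (0 : ℕ)) ((j, t) : Vtx)) :
    ∃ s : ℕ, s ≤ t ∧ j = 3 * s := by
  have hk' : t ≤ k := by omega
  have key : ∀ v : Vtx, Relation.ReflTransGen (GwDir (3 * k + 1)) ((0 : ℕ), (0 : ℕ)) v →
      v.2 ≤ k → ∃ s : ℕ, s ≤ v.2 ∧ v.1 = 3 * s := by
    intro v hv
    induction hv with
    | refl => exact fun _ => ⟨0, by omega, by simp⟩
    | tail hb hbc ih =>
      rename_i b c
      intro hc
      obtain ⟨hrow, htime, hcol⟩ := hbc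
      have hb2 : b.2 ≤ k := by omega
      obtain ⟨s, hs, hbs⟩ := ih hb2
      rcases hcol with h | h
      · exact ⟨s, by omega, by omega⟩
      · refine ⟨s + 1, by omega, ?_⟩
        have : b.1 + 3 < 3 * k + 1 := by omega
        rw [h, Nat.mod_eq_of_lt this]
        omega
  obtain ⟨s, hs, hjs⟩ := key (j, t) hpath hk'
  exact ⟨s, hs, hjs⟩
end
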